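/- arXiv:math/0302130 — 14 statements merged into one kernel-verified Lean document; each statement's English description precedes it below -/
import Mathlib

section
/- Let A be a square matrix with nonnegative integer entries, indexed by a finite nonempty set I, which is irreducible in the sense that for all i, j ∈ I there exists n ≥ 1 with (A^n)_{ij} > 0. Then A has a nondegenerate eigenvalue: there exist a real number λ and a real vector (r_i)_{i∈I} with A r = λ r and r_i ≠ 0 for all i ∈ I. -/
section PFaux
variable {I : Type*} [Fintype I] [Nonempty I] [DecidableEq I]

lemma pf_pow_nonneg (A : Matrix I I ℝ) (hA : ∀ i j, 0 ≤ A i j) :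
    ∀ (n : ℕ) (i j : I), 0 ≤ (A ^ n) i j := by
  intro n
  induction n with
  | zero =>
      intro i j
      simp only [pow_zero, Matrix.one_apply]
      split <;> norm_num
  | succ n ih =>
      intro i j
      rw [pow_succ, Matrix.mul_apply]
      exact Finset.sum_nonneg fun k _ => mul_nonneg (ih i k) (hA k j)

lemma pf_one_add_nonneg (A : Matrix I I ℝ) (hA : ∀ i j, 0 ≤ A i j) (i j : I) :
    0 ≤ (1 + A) i j := by
  have : (1 : Matrix I I ℝ) i j = if i = j then 1 else 0 := Matrix.one_apply
  simp only [Matrix.add_apply, this]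
  split <;> [linarith [hA i j]; simpa using hA i j]

lemma pf_B_mono (A : Matrix I I ℝ) (hA : ∀ i j, 0 ≤ A i j) {m n : ℕ} (hmn : m ≤ n)
    (i j : I) : ((1 + A) ^ m) i j ≤ ((1 + A) ^ n) i j := by
  induction n, hmn using Nat.le_induction with
  | base => exact le_refl _
  | succ n hmn ih =>
      refine ih.trans ?_
      have h1 : (1 + A) ^ (n + 1) = (1 + A) ^ n + (1 + A) ^ n * A := by
        rw [pow_succ, mul_add, mul_one]
      rw [h1, Matrix.add_apply, Matrix.mul_apply]
      have : 0 ≤ ∑ k, ((1 + A) ^ n) i k * A k j :=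
        Finset.sum_nonneg fun k _ =>
          mul_nonneg (pf_pow_nonneg (1 + A) (pf_one_add_nonneg A hA) n i k) (hA k j)
      linarith

lemma pf_B_ge_pow (A : Matrix I I ℝ) (hA : ∀ i j, 0 ≤ A i j) :
    ∀ (n : ℕ) (i j : I), (A ^ n) i j ≤ ((1 + A) ^ n) i j := by
  intro n
  induction n with
  | zero => intro i j; simp
  | succ n ih =>
      intro i j
      have h1 : (1 + A) ^ (n + 1) = (1 + A) ^ n + A * (1 + A) ^ n := by
        rw [pow_succ', add_mul, one_mul]
      rw [h1, Matrix.add_apply, pow_succ', Matrix.mul_apply, Matrix.mul_apply]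
      have h2 : ∑ k, A i k * (A ^ n) k j ≤ ∑ k, A i k * ((1 + A) ^ n) k j :=
        Finset.sum_le_sum fun k _ => mul_le_mul_of_nonneg_left (ih k j) (hA i k)
      have h3 : 0 ≤ ((1 + A) ^ n) i j :=
        pf_pow_nonneg (1 + A) (pf_one_add_nonneg A hA) n i j
      linarith

/-- There is `N` with `(1+A)^N` entrywise positive. -/
lemma pf_exists_pos_pow (A : Matrix I I ℝ) (hA : ∀ i j, 0 ≤ A i j)
    (hirr : ∀ i j, ∃ n : ℕ, 1 ≤ n ∧ 0 < (A ^ n) i j) :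
    ∃ N : ℕ, ∀ i j, 0 < ((1 + A) ^ N) i j := by
  choose n hn1 hn2 using hirr
  refine ⟨Finset.univ.sup (fun p : I × I => n p.1 p.2), fun i j => ?_⟩
  have hle : n i j ≤ Finset.univ.sup (fun p : I × I => n p.1 p.2) :=
    Finset.le_sup (f := fun p : I × I => n p.1 p.2) (Finset.mem_univ (i, j))
  calc (0:ℝ) < (A ^ n i j) i j := hn2 i j
    _ ≤ ((1 + A) ^ n i j) i j := pf_B_ge_pow A hA _ i j
    _ ≤ _ := pf_B_mono A hA hle i j

/-- Positive matrix times nonneg nonzero vector is positive. -/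
lemma pf_mulVec_pos (B : Matrix I I ℝ) (hB : ∀ i j, 0 < B i j) (z : I → ℝ)
    (hz : ∀ i, 0 ≤ z i) (j : I) (hj : 0 < z j) (i : I) : 0 < B.mulVec z i := by
  rw [Matrix.mulVec, dotProduct]
  refine Finset.sum_pos' (fun k _ => mul_nonneg (hB i k).le (hz k)) ⟨j, Finset.mem_univ j, mul_pos (hB i j) hj⟩

end PFaux


/-- A square matrix with nonnegative integer entries, indexed by a finite
nonempty set `I`, which is irreducible (for all `i j` there is `n ≥ 1` with `(A^n) i j > 0`),
has a nondegenerate eigenvalue: a real eigenvalue admitting an eigenvector all of whose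
coordinates are nonzero. -/
theorem stmt_0 {I : Type*} [Fintype I] [Nonempty I] [DecidableEq I]
    (A : Matrix I I ℝ)
    (hint : ∀ i j, ∃ k : ℕ, A i j = (k : ℝ))
    (hirr : ∀ i j, ∃ n : ℕ, 1 ≤ n ∧ 0 < (A ^ n) i j) :
    ∃ (lam : ℝ) (r : I → ℝ), A.mulVec r = lam • r ∧ ∀ i, r i ≠ 0 := by
  classical
  have hA : ∀ i j, 0 ≤ A i j := by
    intro i j; obtain ⟨k, hk⟩ := hint i j; rw [hk]; positivity
  obtain ⟨N, hN⟩ := pf_exists_pos_pow A hA hirr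
  set B := (1 + A) ^ N with hBdef
  have hc : (0:ℝ) < (Fintype.card I : ℝ) := by exact_mod_cast Fintype.card_pos (α := I)
  have hcne : (Fintype.card I : ℝ) ≠ 0 := hc.ne'
  set M0 : ℝ := ∑ i, ∑ j, A i j with hM0def
  have hM0 : ∀ i j, A i j ≤ M0 := by
    intro i j
    calc A i j ≤ ∑ j', A i j' :=
          Finset.single_le_sum (fun k _ => hA i k) (Finset.mem_univ j)
      _ ≤ M0 :=
          Finset.single_le_sum (f := fun i' => ∑ j', A i' j')
            (fun k _ => Finset.sum_nonneg fun l _ => hA k l) (Finset.mem_univ i)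
  have hM0nn : 0 ≤ M0 := Finset.sum_nonneg fun k _ => Finset.sum_nonneg fun l _ => hA k l
  set M : ℝ := (Fintype.card I : ℝ) * M0 with hMdef
  -- the bound: any feasible lam is at most M
  have hbound : ∀ (lam : ℝ) (x : I → ℝ), 0 ≤ lam → (∀ i, 0 ≤ x i) → (∑ i, x i) = 1 →
      (∀ i, lam * x i ≤ A.mulVec x i) → lam ≤ M := by
    intro lam x hlam hx hsum hfeas
    obtain ⟨i, _, hi⟩ : ∃ i ∈ Finset.univ, (Fintype.card I : ℝ)⁻¹ ≤ x i := by
      apply Finset.exists_le_of_sum_le Finset.univ_nonempty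
      rw [hsum, Finset.sum_const, nsmul_eq_mul, Finset.card_univ, mul_inv_cancel₀ hcne]
    have h1 : lam * (Fintype.card I : ℝ)⁻¹ ≤ lam * x i := mul_le_mul_of_nonneg_left hi hlam
    have h2 : A.mulVec x i ≤ M0 := by
      rw [Matrix.mulVec, dotProduct]
      calc ∑ j, A i j * x j ≤ ∑ j, M0 * x j :=
            Finset.sum_le_sum fun j _ => mul_le_mul_of_nonneg_right (hM0 i j) (hx j)
        _ = M0 * ∑ j, x j := by rw [Finset.mul_sum]
        _ = M0 := by rw [hsum, mul_one]
    have h3 : lam * (Fintype.card I : ℝ)⁻¹ ≤ M0 := le_trans h1 (le_trans (hfeas i) h2)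
    calc lam = (lam * (Fintype.card I : ℝ)⁻¹) * (Fintype.card I : ℝ) := by field_simp
      _ ≤ M0 * (Fintype.card I : ℝ) := mul_le_mul_of_nonneg_right h3 hc.le
      _ = M := by rw [hMdef, mul_comm]
  -- the feasible set
  set C : Set (ℝ × (I → ℝ)) :=
    {p | 0 ≤ p.1 ∧ p.1 ≤ M ∧ (∀ i, 0 ≤ p.2 i) ∧ (∑ i, p.2 i) = 1 ∧
      ∀ i, p.1 * p.2 i ≤ A.mulVec p.2 i} with hCdef
  have hcont : ∀ i, Continuous fun p : ℝ × (I → ℝ) => A.mulVec p.2 i := by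
    intro i
    have : (fun p : ℝ × (I → ℝ) => A.mulVec p.2 i) = fun p => ∑ j, A i j * p.2 j := by
      funext p; rw [Matrix.mulVec, dotProduct]
    rw [this]
    exact continuous_finset_sum _ fun j _ =>
      continuous_const.mul ((continuous_apply j).comp continuous_snd)
  have hclosed : IsClosed C := by
    have hCeq : C = {p : ℝ × (I → ℝ) | 0 ≤ p.1} ∩ {p | p.1 ≤ M} ∩ (⋂ i, {p | 0 ≤ p.2 i})
        ∩ {p | (∑ i, p.2 i) = 1} ∩ (⋂ i, {p | p.1 * p.2 i ≤ A.mulVec p.2 i}) := by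
      ext p
      simp only [hCdef, Set.mem_setOf_eq, Set.mem_inter_iff, Set.mem_iInter]
      tauto
    rw [hCeq]
    refine IsClosed.inter (IsClosed.inter (IsClosed.inter (IsClosed.inter ?_ ?_) ?_) ?_) ?_
    · exact isClosed_le continuous_const continuous_fst
    · exact isClosed_le continuous_fst continuous_const
    · exact isClosed_iInter fun i =>
        isClosed_le continuous_const ((continuous_apply i).comp continuous_snd)
    · exact isClosed_eq
        (continuous_finset_sum _ fun i _ => (continuous_apply i).comp continuous_snd)
        continuous_const
    · exact isClosed_iInter fun i =>
        isClosed_le (continuous_fst.mul ((continuous_apply i).comp continuous_snd)) (hcont i)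
  have hsubset : C ⊆ (Set.Icc 0 M) ×ˢ (Set.pi Set.univ fun _ : I => Set.Icc (0:ℝ) 1) := by
    rintro ⟨lam, x⟩ ⟨h1, h2, h3, h4, -⟩
    refine ⟨⟨h1, h2⟩, fun i _ => ⟨h3 i, ?_⟩⟩
    calc x i ≤ ∑ j, x j := Finset.single_le_sum (fun k _ => h3 k) (Finset.mem_univ i)
      _ = 1 := h4
  have hCcompact : IsCompact C :=
    IsCompact.of_isClosed_subset
      (isCompact_Icc.prod (isCompact_univ_pi fun _ => isCompact_Icc)) hclosed hsubset
  have hCne : C.Nonempty := by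
    refine ⟨(0, fun _ => (Fintype.card I : ℝ)⁻¹), le_refl _, by positivity, fun i => by positivity, ?_, ?_⟩
    · rw [Finset.sum_const, nsmul_eq_mul, Finset.card_univ, mul_inv_cancel₀ hcne]
    · intro i
      rw [zero_mul, Matrix.mulVec, dotProduct]
      exact Finset.sum_nonneg fun j _ => mul_nonneg (hA i j) (by positivity)
  obtain ⟨p, hpC, hpmax⟩ := hCcompact.exists_isMaxOn hCne continuous_fst.continuousOn
  obtain ⟨hr0, hrM, hx0, hxsum, hfeas⟩ := hpC
  set r : ℝ := p.1 with hrdef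
  set x : I → ℝ := p.2 with hxdef
  -- x has a positive coordinate
  obtain ⟨j0, hj0⟩ : ∃ j0, 0 < x j0 := by
    by_contra h
    push_neg at h
    have : (∑ i, x i) = 0 := le_antisymm (Finset.sum_nonpos fun i _ => h i)
      (Finset.sum_nonneg fun i _ => hx0 i)
    rw [hxsum] at this; norm_num at this
  -- key step : A x = r x
  have heq : A.mulVec x = r • x := by
    by_contra hne
    set z : I → ℝ := A.mulVec x - r • x with hzdef
    have hz : ∀ i, 0 ≤ z i := by
      intro i
      simp only [hzdef, Pi.sub_apply, Pi.smul_apply, smul_eq_mul, sub_nonneg]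
      exact hfeas i
    have hzne : z ≠ 0 := fun h => hne (by rwa [hzdef, sub_eq_zero] at h)
    obtain ⟨j1, hj1⟩ : ∃ j1, 0 < z j1 := by
      obtain ⟨j1, hj1⟩ := Function.ne_iff.mp hzne
      exact ⟨j1, lt_of_le_of_ne (hz j1) (Ne.symm (by simpa using hj1))⟩
    set y : I → ℝ := B.mulVec x with hydef
    have hy : ∀ i, 0 < y i := pf_mulVec_pos B hN x hx0 j0 hj0
    have hcomm : A * B = B * A :=
      (((Commute.one_right A).add_right (Commute.refl A)).pow_right N)
    have hByz : B.mulVec z = A.mulVec y - r • y := by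
      rw [hzdef, Matrix.mulVec_sub, Matrix.mulVec_smul, hydef,
        Matrix.mulVec_mulVec, ← hcomm, ← Matrix.mulVec_mulVec]
    have hpos : ∀ i, 0 < A.mulVec y i - r * y i := by
      intro i
      have := pf_mulVec_pos B hN z hz j1 hj1 i
      rw [hByz] at this
      simpa using this
    set eps : ℝ := Finset.univ.inf' Finset.univ_nonempty
      (fun i => (A.mulVec y i - r * y i) / y i) with hepsdef
    have heps : 0 < eps := by
      rw [hepsdef, Finset.lt_inf'_iff]
      intro i _
      exact div_pos (hpos i) (hy i)
    have hepsle : ∀ i, (r + eps) * y i ≤ A.mulVec y i := by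
      intro i
      have h1 : eps ≤ (A.mulVec y i - r * y i) / y i :=
        Finset.inf'_le _ (Finset.mem_univ i)
      have h2 : eps * y i ≤ A.mulVec y i - r * y i := by
        rw [← le_div_iff₀ (hy i)]; exact h1
      nlinarith
    set s : ℝ := ∑ i, y i with hsdef
    have hs : 0 < s := Finset.sum_pos (fun i _ => hy i) Finset.univ_nonempty
    set y' : I → ℝ := s⁻¹ • y with hy'def
    have hy'nn : ∀ i, 0 ≤ y' i := fun i => by
      simp only [hy'def, Pi.smul_apply, smul_eq_mul]
      exact mul_nonneg (inv_nonneg.mpr hs.le) (hy i).le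
    have hy'sum : (∑ i, y' i) = 1 := by
      simp only [hy'def, Pi.smul_apply, smul_eq_mul]
      rw [← Finset.mul_sum, ← hsdef, inv_mul_cancel₀ hs.ne']
    have hy'feas : ∀ i, (r + eps) * y' i ≤ A.mulVec y' i := by
      intro i
      rw [hy'def, Matrix.mulVec_smul]
      simp only [Pi.smul_apply, smul_eq_mul]
      have := hepsle i
      have hsinv : 0 ≤ s⁻¹ := by positivity
      calc (r + eps) * (s⁻¹ * y i) = s⁻¹ * ((r + eps) * y i) := by ring
        _ ≤ s⁻¹ * A.mulVec y i := mul_le_mul_of_nonneg_left this hsinv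
    have hre0 : 0 ≤ r + eps := by linarith
    have hreM : r + eps ≤ M := hbound _ _ hre0 hy'nn hy'sum hy'feas
    have hmem : (r + eps, y') ∈ C := ⟨hre0, hreM, hy'nn, hy'sum, hy'feas⟩
    have := hpmax hmem
    simp only [Set.mem_setOf_eq] at this
    have : r + eps ≤ r := this
    linarith
  refine ⟨r, x, heq, ?_⟩
  intro i
  obtain ⟨n, hn1, hn2⟩ := hirr i j0
  have hpown : ∀ m : ℕ, (A ^ m).mulVec x = r ^ m • x := by
    intro m
    induction m with
    | zero => simp
    | succ m ih =>
        rw [pow_succ', ← Matrix.mulVec_mulVec, ih, Matrix.mulVec_smul, heq,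
          smul_smul, ← pow_succ]
  have hlow : 0 < (A ^ n).mulVec x i := by
    rw [Matrix.mulVec, dotProduct]
    refine Finset.sum_pos' (fun k _ => mul_nonneg (pf_pow_nonneg A hA n i k) (hx0 k))
      ⟨j0, Finset.mem_univ j0, mul_pos hn2 hj0⟩
  rw [hpown n] at hlow
  simp only [Pi.smul_apply, smul_eq_mul] at hlow
  intro h
  rw [h, mul_zero] at hlow
  exact lt_irrefl 0 hlow
end

section
/- Let Γ = (I, {a_ij}) be a generalized tree and let A = (a_ij) be its adjacency matrix, viewed as a real symmetric matrix. If λ is a nondegenerate eigenvalue of A (i.e. there is an eigenvector (r_i)_{i∈I} with A r = λ r and r_i ≠ 0 for all i), then λ has multiplicity 1: the eigenspace {v : A v = λ v} is one-dimensional. -/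
/-!
If `r` and `w` are eigenvectors of a symmetric matrix `A` for the same eigenvalue, the
"Wronskian flow" `F k m = A k m * (r k * w m - w k * r m)` is antisymmetric, supported on the
edges of the graph of `A`, and has zero divergence at every vertex. On a forest every edge is a
bridge, so the flow across it equals the total flow out of one side of the cut, which is zero.
Hence `w / r` is constant along edges, and on a tree `w` is a multiple of `r`.
-/

open Finset Module

namespace SimpleGraph

variable {V : Type*} {G : SimpleGraph V}

lemma IsBridge.eq_of_adj_of_reachable_deleteEdges {u v k m : V} (hb : G.IsBridge s(u, v))
    (hk : (G.deleteEdges {s(u, v)}).Reachable v k)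
    (hm : ¬ (G.deleteEdges {s(u, v)}).Reachable v m) (hadj : G.Adj k m) : k = v ∧ m = u := by
  have hkm : s(k, m) = s(u, v) := by
    by_contra hne
    exact hm (hk.trans (deleteEdges_adj.mpr ⟨hadj, hne⟩).reachable)
  rcases Sym2.eq_iff.mp hkm with ⟨rfl, rfl⟩ | ⟨rfl, rfl⟩
  · exact absurd hk.symm (isBridge_iff.mp hb)
  · exact ⟨rfl, rfl⟩

lemma Preconnected.mul_eq_mul_of_forall_adj {K : Type*} [CommRing K] [IsDomain K]
    (hG : G.Preconnected) {r w : V → K} (hr0 : ∀ i, r i ≠ 0)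
    (hedge : ∀ k m, G.Adj k m → r k * w m = w k * r m) (u v : V) :
    w u * r v = w v * r u := by
  obtain ⟨p⟩ := hG u v
  induction p with
  | nil => rfl
  | @cons x y z hxy _ ih =>
    apply mul_right_cancel₀ (hr0 y)
    linear_combination r x * ih - r z * hedge x y hxy

variable [Fintype V] {M : Type*} [AddCommGroup M] [IsAddTorsionFree M] {F : V → V → M}

lemma sum_sum_compl_eq_zero_of_antisymm [DecidableEq V] (hanti : ∀ i j, F i j = -F j i)
    (hdiv : ∀ i, ∑ j, F i j = 0) (S : Finset V) : ∑ i ∈ S, ∑ j ∈ Sᶜ, F i j = 0 := by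
  have hinner : ∑ i ∈ S, ∑ j ∈ S, F i j = 0 := self_eq_neg.mp <| by
    conv_lhs => rw [Finset.sum_comm]
    simp only [← Finset.sum_neg_distrib, ← hanti]
  calc ∑ i ∈ S, ∑ j ∈ Sᶜ, F i j
      = ∑ i ∈ S, ∑ j ∈ S, F i j + ∑ i ∈ S, ∑ j ∈ Sᶜ, F i j := by rw [hinner, zero_add]
    _ = ∑ i ∈ S, ∑ j, F i j := by
        rw [← Finset.sum_add_distrib]
        exact Finset.sum_congr rfl fun i _ ↦ Finset.sum_add_sum_compl S (F i)
    _ = 0 := Finset.sum_eq_zero fun i _ ↦ hdiv i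

theorem IsAcyclic.eq_zero_of_antisymm_of_sum_eq_zero (hG : G.IsAcyclic)
    (hanti : ∀ i j, F i j = -F j i) (hsupp : ∀ i j, ¬ G.Adj i j → F i j = 0)
    (hdiv : ∀ i, ∑ j, F i j = 0) (i j : V) : F i j = 0 := by
  classical
  refine (em (G.Adj i j)).elim (fun hij ↦ ?_) (hsupp i j)
  have hb := isAcyclic_iff_forall_adj_isBridge.mp hG hij
  -- the side of the bridge `s(i, j)` containing `j`
  set S := univ.filter fun k ↦ (G.deleteEdges {s(i, j)}).Reachable j k
  have hji : (j, i) ∈ S ×ˢ Sᶜ := by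
    simpa [S] using fun h ↦ isBridge_iff.mp hb h.symm
  have hcross : ∀ p ∈ S ×ˢ Sᶜ, p ≠ (j, i) → F p.1 p.2 = 0 := by
    rintro ⟨k, m⟩ hp hne
    simp only [S, mem_product, mem_compl, mem_filter, mem_univ, true_and] at hp
    refine hsupp k m fun hkm ↦ hne ?_
    obtain ⟨rfl, rfl⟩ := hb.eq_of_adj_of_reachable_deleteEdges hp.1 hp.2 hkm
    rfl
  have hcut := sum_sum_compl_eq_zero_of_antisymm hanti hdiv S
  rw [← Finset.sum_product' S Sᶜ F, Finset.sum_eq_single_of_mem _ hji hcross] at hcut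
  rw [hanti, hcut, neg_zero]

end SimpleGraph

namespace Matrix

variable {ι K : Type*} [Fintype ι] [Field K] {A : Matrix ι ι K} {lam : K} {r w : ι → K}

lemma sum_mul_sub_mul_eq_zero_of_mulVec_eq_smul (hr : A *ᵥ r = lam • r)
    (hw : A *ᵥ w = lam • w) (k : ι) : ∑ m, A k m * (r k * w m - w k * r m) = 0 := by
  have hrk : ∑ m, A k m * r m = lam * r k := by simpa [mulVec, dotProduct] using congrFun hr k
  have hwk : ∑ m, A k m * w m = lam * w k := by simpa [mulVec, dotProduct] using congrFun hw k
  calc ∑ m, A k m * (r k * w m - w k * r m)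
      = r k * ∑ m, A k m * w m - w k * ∑ m, A k m * r m := by
        rw [Finset.mul_sum, Finset.mul_sum, ← Finset.sum_sub_distrib]
        exact Finset.sum_congr rfl fun m _ ↦ by ring
    _ = 0 := by rw [hrk, hwk]; ring

variable [CharZero K] {G : SimpleGraph ι}

theorem IsSymm.mul_eq_mul_of_apply_ne_zero (hA : A.IsSymm) (hG : G.IsAcyclic)
    (hsupp : ∀ i j, i ≠ j → ¬ G.Adj i j → A i j = 0) (hr : A *ᵥ r = lam • r)
    (hw : A *ᵥ w = lam • w) {k m : ι} (hA0 : A k m ≠ 0) :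
    r k * w m = w k * r m := by
  have hflow := hG.eq_zero_of_antisymm_of_sum_eq_zero
    (F := fun k m ↦ A k m * (r k * w m - w k * r m))
    (fun i j ↦ by rw [hA.apply i j]; ring)
    (fun i j hij ↦ by
      rcases eq_or_ne i j with rfl | hne
      · ring
      · rw [hsupp i j hne hij, zero_mul])
    (sum_mul_sub_mul_eq_zero_of_mulVec_eq_smul hr hw) k m
  exact sub_eq_zero.mp ((mul_eq_zero.mp hflow).resolve_left hA0)

theorem IsSymm.finrank_eigenspace_eq_one [DecidableEq ι] (hA : A.IsSymm) (hG : G.IsTree)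
    (hadj : ∀ i j, i ≠ j → (G.Adj i j ↔ A i j ≠ 0)) (hr : A *ᵥ r = lam • r)
    (hr0 : ∀ i, r i ≠ 0) : finrank K (End.eigenspace (toLin' A) lam) = 1 := by
  obtain ⟨i₀⟩ := hG.connected.nonempty
  have hmem : ∀ {v}, v ∈ End.eigenspace (toLin' A) lam ↔ A *ᵥ v = lam • v := by simp
  refine (finrank_eq_one_iff_of_nonzero' ⟨r, hmem.mpr hr⟩
    fun h ↦ hr0 i₀ (congrFun (congrArg Subtype.val h) i₀)).mpr ?_
  rintro ⟨w, hw⟩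
  have hprop := hG.connected.preconnected.mul_eq_mul_of_forall_adj hr0
    (fun k m hkm ↦ hA.mul_eq_mul_of_apply_ne_zero hG.isAcyclic
      (fun i j hij ↦ not_imp_comm.mp (hadj i j hij).mpr)
      hr (hmem.mp hw) ((hadj k m hkm.ne).mp hkm))
  refine ⟨w i₀ / r i₀, Subtype.ext (funext fun k ↦ ?_)⟩
  simp only [SetLike.mk_smul_mk, Pi.smul_apply, smul_eq_mul]
  rw [div_mul_eq_mul_div, div_eq_iff (hr0 i₀), hprop i₀ k]

end Matrix

theorem stmt_1_general {I : Type*} [Fintype I] [DecidableEq I]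
    (a : I → I → ℕ) (hsymm : ∀ i j, a i j = a j i) (hle : ∀ i j, a i j ≤ 1)
    (G : SimpleGraph I) (hG : ∀ i j, G.Adj i j ↔ i ≠ j ∧ a i j = 1)
    (htree : G.IsTree)
    (A : Matrix I I ℝ) (hA : ∀ i j, A i j = (a i j : ℝ))
    (lam : ℝ) (r : I → ℝ) (hr : A.mulVec r = lam • r) (hr0 : ∀ i, r i ≠ 0) :
    Module.finrank ℝ (Module.End.eigenspace (Matrix.toLin' A) lam) = 1 := by
  have hAsymm : A.IsSymm := Matrix.IsSymm.ext fun i j ↦ by rw [hA, hA, hsymm]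
  refine hAsymm.finrank_eigenspace_eq_one htree (fun i j hij ↦ ?_) hr hr0
  have : a i j ≠ 0 ↔ a i j = 1 := by have := hle i j; omega
  simp [hG, hij, hA, this]

/-- If `Γ = (I, a)` is a generalized tree (symmetric `a : I × I → ℕ` with
`a i j ≤ 1`, whose underlying simple graph — edges between `i ≠ j` with `a i j = 1` — is a
tree) and `λ` is a nondegenerate eigenvalue of the adjacency matrix `A` (i.e. it admits a
real eigenvector all of whose coordinates are nonzero), then the `λ`-eigenspace of `A` is
one-dimensional. -/
theorem stmt_1 {I : Type*} [Fintype I] [Nonempty I] [DecidableEq I]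
    (a : I → I → ℕ) (hsymm : ∀ i j, a i j = a j i) (hle : ∀ i j, a i j ≤ 1)
    (G : SimpleGraph I) (hG : ∀ i j, G.Adj i j ↔ i ≠ j ∧ a i j = 1)
    (htree : G.IsTree)
    (A : Matrix I I ℝ) (hA : ∀ i j, A i j = (a i j : ℝ))
    (lam : ℝ) (r : I → ℝ) (hr : A.mulVec r = lam • r) (hr0 : ∀ i, r i ≠ 0) :
    Module.finrank ℝ (Module.End.eigenspace (Matrix.toLin' A) lam) = 1 :=
  stmt_1_general a hsymm hle G hG htree A hA lam r hr hr0
end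

section
/- Let Γ = (I, {a_ij}) be a generalized tree with adjacency matrix A = (a_ij), viewed as a matrix over ℂ, and let λ ∈ ℂ. If r = (r_i)_{i∈I} and r' = (r'_i)_{i∈I} are two vectors with A r = λ r, A r' = λ r', and r_i ≠ 0 and r'_i ≠ 0 for all i ∈ I, then r and r' are proportional: there exists c ∈ ℂ with r' = c·r. -/
/-!
For two `λ`-eigenvectors `r, r'` of a symmetric matrix `A`, the discrete Wronskian
`w v k = A v k * (r k * r' v - r' k * r v)` is antisymmetric and sums to zero over `k` at every
vertex `v`, i.e. it is a circulation supported on the edges of the graph of `A`. On a tree every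
edge is a bridge, so summing over the side of a bridge shows that the circulation vanishes on
that edge. Hence `r' / r` is constant along edges, and thus constant on the connected tree.
-/

open Finset

theorem Finset.sum_sum_eq_zero_of_antisymm {ι M : Type*} [AddCommGroup M] {f : ι → ι → M}
    (T : Finset ι) (hanti : ∀ v k, f k v = -f v k) (hdiag : ∀ v, f v v = 0) :
    ∑ v ∈ T, ∑ k ∈ T, f v k = 0 := by
  rw [← sum_product']
  refine sum_involution (fun p _ => p.swap)
    (fun p _ => by rw [Prod.fst_swap, Prod.snd_swap, hanti p.1 p.2, add_neg_cancel]) ?_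
    (fun p hp => mem_product.2 ⟨(mem_product.1 hp).2, (mem_product.1 hp).1⟩) (fun _ _ => rfl)
  rintro ⟨v, k⟩ _ hne heq
  obtain rfl : k = v := congrArg Prod.fst heq
  exact hne (hdiag k)

namespace SimpleGraph

variable {V : Type*} {G : SimpleGraph V}

lemma eq_and_eq_of_adj_of_reachable_deleteEdges {i j v k : V}
    (hj : ¬(G.deleteEdges {s(i, j)}).Reachable i j)
    (hv : (G.deleteEdges {s(i, j)}).Reachable i v)
    (hk : ¬(G.deleteEdges {s(i, j)}).Reachable i k) (hvk : G.Adj v k) : v = i ∧ k = j := by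
  by_cases hs : s(v, k) = s(i, j)
  · rcases Sym2.eq_iff.mp hs with h | ⟨rfl, rfl⟩
    · exact h
    · exact absurd hv hj
  · exact absurd (hv.trans (deleteEdges_adj.2 ⟨hvk, by simpa using hs⟩).reachable) hk

theorem IsAcyclic.eq_zero_of_sum_eq_zero [Fintype V] {M : Type*} [AddCommGroup M]
    {f : V → V → M} (hG : G.IsAcyclic) (hanti : ∀ v k, f k v = -f v k)
    (hsupp : ∀ v k, ¬G.Adj v k → f v k = 0) (hdiv : ∀ v, ∑ k, f v k = 0) {i j : V}
    (hij : G.Adj i j) : f i j = 0 := by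
  classical
  set T : Finset V := {v | (G.deleteEdges {s(i, j)}).Reachable i v}
  have hbridge : ¬(G.deleteEdges {s(i, j)}).Reachable i j :=
    isBridge_iff.1 (isAcyclic_iff_forall_adj_isBridge.1 hG hij)
  have hiT : i ∈ T := by simp [T]
  have hjT : j ∈ Tᶜ := by simpa [T] using hbridge
  have hcut : ∀ v ∈ T, ∀ k ∈ Tᶜ, f v k ≠ 0 → v = i ∧ k = j := fun v hv k hk hne =>
    eq_and_eq_of_adj_of_reachable_deleteEdges hbridge (by simpa [T] using hv)
      (by simpa [T] using hk) (not_imp_comm.1 (hsupp v k) hne)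
  have hinner : ∑ v ∈ T, ∑ k ∈ T, f v k = 0 :=
    T.sum_sum_eq_zero_of_antisymm hanti fun v => hsupp v v G.irrefl
  have houter : ∑ v ∈ T, ∑ k ∈ Tᶜ, f v k = f i j := by
    rw [← sum_product', sum_eq_single_of_mem (i, j) (mem_product.2 ⟨hiT, hjT⟩)]
    rintro ⟨v, k⟩ hvk hne
    by_contra h
    obtain ⟨rfl, rfl⟩ := hcut v (mem_product.1 hvk).1 k (mem_product.1 hvk).2 h
    exact hne rfl
  calc f i j = ∑ v ∈ T, ∑ k ∈ T, f v k + ∑ v ∈ T, ∑ k ∈ Tᶜ, f v k := by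
        rw [hinner, houter, zero_add]
    _ = ∑ v ∈ T, ∑ k, f v k := by simp only [← sum_add_distrib, sum_add_sum_compl]
    _ = 0 := sum_eq_zero fun v _ => hdiv v

theorem Connected.exists_eq_smul_of_adj {K : Type*} [Field K] (hG : G.Connected)
    {r r' : V → K} (hr0 : ∀ i, r i ≠ 0)
    (hadj : ∀ i j, G.Adj i j → r' i * r j = r' j * r i) :
    ∃ c : K, r' = c • r := by
  have hwalk : ∀ {u v : V}, G.Walk u v → r' u / r u = r' v / r v := by
    intro u v p
    induction p with
    | nil => rfl
    | cons h _ ih => exact ((div_eq_div_iff (hr0 _) (hr0 _)).2 (hadj _ _ h)).trans ih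
  obtain ⟨i₀⟩ := hG.nonempty
  refine ⟨r' i₀ / r i₀, funext fun v => ?_⟩
  rw [Pi.smul_apply, smul_eq_mul, hwalk (hG.preconnected i₀ v).some, div_mul_cancel₀ _ (hr0 v)]

end SimpleGraph

namespace Matrix

variable {ι R : Type*} [CommRing R] {A : Matrix ι ι R} {r r' : ι → R}

def wronskian (A : Matrix ι ι R) (r r' : ι → R) (v k : ι) : R :=
  A v k * (r k * r' v - r' k * r v)

lemma wronskian_self (v : ι) : A.wronskian r r' v v = 0 := by
  rw [wronskian, mul_comm (r v), sub_self, mul_zero]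

lemma wronskian_swap (hA : A.IsSymm) (v k : ι) : A.wronskian r r' k v = -A.wronskian r r' v k := by
  rw [wronskian, wronskian, hA.apply k v]
  ring

lemma sum_wronskian_eq_zero [Fintype ι] {lam : R} (hr : A *ᵥ r = lam • r)
    (hr' : A *ᵥ r' = lam • r') (v : ι) : ∑ k, A.wronskian r r' v k = 0 := by
  have hrv : ∑ k, A v k * r k = lam * r v := by simpa [mulVec, dotProduct] using congrFun hr v
  have hr'v : ∑ k, A v k * r' k = lam * r' v := by simpa [mulVec, dotProduct] using congrFun hr' v
  calc ∑ k, A.wronskian r r' v k = (∑ k, A v k * r k) * r' v - (∑ k, A v k * r' k) * r v := by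
        simp only [wronskian, sum_mul, ← sum_sub_distrib, mul_sub, mul_assoc]
    _ = 0 := by rw [hrv, hr'v]; ring

end Matrix

theorem stmt_2_general {I : Type*} [Fintype I]
    (a : I → I → ℕ) (hsymm : ∀ i j, a i j = a j i) (hle : ∀ i j, a i j ≤ 1)
    (G : SimpleGraph I) (hG : ∀ i j, G.Adj i j ↔ i ≠ j ∧ a i j = 1)
    (htree : G.IsTree)
    (A : Matrix I I ℂ) (hA : ∀ i j, A i j = (a i j : ℂ))
    (lam : ℂ) (r r' : I → ℂ)
    (hr : A.mulVec r = lam • r) (hr0 : ∀ i, r i ≠ 0)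
    (hr' : A.mulVec r' = lam • r') :
    ∃ c : ℂ, r' = c • r := by
  have hAsymm : A.IsSymm := Matrix.IsSymm.ext fun i j => by rw [hA, hA, hsymm]
  have hsupp : ∀ i j, ¬G.Adj i j → A.wronskian r r' i j = 0 := by
    intro i j hij
    rcases eq_or_ne i j with rfl | hne
    · exact Matrix.wronskian_self i
    · have ha : a i j = 0 := by
        have hne1 : a i j ≠ 1 := fun h => hij ((hG i j).2 ⟨hne, h⟩)
        have := hle i j
        omega
      rw [Matrix.wronskian, hA, ha, Nat.cast_zero, zero_mul]
  refine htree.1.exists_eq_smul_of_adj hr0 fun i j hij => ?_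
  have hflux := htree.2.eq_zero_of_sum_eq_zero (Matrix.wronskian_swap hAsymm) hsupp
    (Matrix.sum_wronskian_eq_zero hr hr') hij
  rw [Matrix.wronskian, hA, ((hG i j).1 hij).2, Nat.cast_one, one_mul, sub_eq_zero] at hflux
  linear_combination hflux

/-- For a generalized tree `Γ = (I, a)` with adjacency matrix `A` over `ℂ`
and `λ ∈ ℂ`, any two eigenvectors of `A` with eigenvalue `λ` all of whose coordinates are
nonzero are proportional. -/
theorem stmt_2 {I : Type*} [Fintype I] [Nonempty I] [DecidableEq I]
    (a : I → I → ℕ) (hsymm : ∀ i j, a i j = a j i) (hle : ∀ i j, a i j ≤ 1)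
    (G : SimpleGraph I) (hG : ∀ i j, G.Adj i j ↔ i ≠ j ∧ a i j = 1)
    (htree : G.IsTree)
    (A : Matrix I I ℂ) (hA : ∀ i j, A i j = (a i j : ℂ))
    (lam : ℂ) (r r' : I → ℂ)
    (hr : A.mulVec r = lam • r) (hr0 : ∀ i, r i ≠ 0)
    (hr' : A.mulVec r' = lam • r') (hr'0 : ∀ i, r' i ≠ 0) :
    ∃ c : ℂ, r' = c • r :=
  stmt_2_general a hsymm hle G hG htree A hA lam r r' hr hr0 hr'
end

section
/- Let T be a tree (a connected acyclic simple graph) on a finite nonempty vertex set I, and let (λ_j)_{j∈I} be any family of complex numbers. Then the system of equations in complex variables y_ij, one for each ordered pair (i,j) of adjacent vertices, given by y_ij · y_ji = 1 for every edge {i,j} and ∑_{i adjacent to j} y_ij = λ_j for every vertex j, has at most one solution. -/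
/-!
Solving the vertex equation at `j` for `y i j` and using `y k j = (y j k)⁻¹` gives
`y i j = λ j - ∑_{k ~ j, k ≠ i} (y j k)⁻¹`, so `y i j` is determined by the values on the edges
`j → k` pointing away from `i`. In a forest the branch behind `j → k` is strictly contained in the
branch behind `i → j`, so induction on the size of the branch shows that two solutions agree.
-/

open Finset

namespace SimpleGraph

variable {V : Type*} {G : SimpleGraph V}

/-- For adjacent `i, j` in a forest, the vertices of the component of `j` in `G` minus the edge
`ij`. -/
def branch (G : SimpleGraph V) (i j : V) : Set V := {v | G.dist v j + 1 = G.dist v i}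

lemma IsAcyclic.eq_of_adj_of_dist_add_one_eq (hG : G.IsAcyclic) {v i j k : V}
    (hj : G.Adj j i) (hk : G.Adj k i) (hjd : G.dist v j + 1 = G.dist v i)
    (hkd : G.dist v k + 1 = G.dist v i) : j = k := by
  have hvi : G.Reachable v i := Reachable.of_dist_ne_zero (by omega)
  obtain ⟨p, hp⟩ := (hvi.trans hj.symm.reachable).exists_walk_length_eq_dist
  obtain ⟨q, hq⟩ := (hvi.trans hk.symm.reachable).exists_walk_length_eq_dist
  have hpq : p.concat hj = q.concat hk := Subtype.mk.inj <| (hG.subsingleton_path v i).elim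
    ⟨_, (p.concat hj).isPath_of_length_eq_dist (by rw [Walk.length_concat, hp, hjd])⟩
    ⟨_, (q.concat hk).isPath_of_length_eq_dist (by rw [Walk.length_concat, hq, hkd])⟩
  exact (Walk.concat_inj hpq).1

lemma IsAcyclic.branch_ssubset_branch (hG : G.IsAcyclic) {i j k : V} (hij : G.Adj i j)
    (hkj : G.Adj k j) (hki : k ≠ i) : G.branch j k ⊂ G.branch i j := by
  refine ⟨fun v (hv : G.dist v k + 1 = G.dist v j) => ?_, fun hsub => ?_⟩
  · have hvj : G.Reachable v j := Reachable.of_dist_ne_zero (by omega)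
    rcases hG.dist_eq_dist_add_one_of_adj_of_reachable v hij.symm hvj with h | h
    · exact absurd (hG.eq_of_adj_of_dist_add_one_eq hkj hij hv h.symm) hki
    · exact h.symm
  · have hj : j ∈ G.branch i j := by
      simp [branch, dist_eq_one_iff_adj.2 hij.symm]
    simpa [branch] using hsub hj

theorem IsAcyclic.eq_of_mul_eq_one_of_sum_eq {K : Type*} [Fintype V] [DivisionRing K]
    [DecidableRel G.Adj] (hG : G.IsAcyclic) {y y' : V → V → K}
    (hy : ∀ i j, G.Adj i j → y i j * y j i = 1) (hy' : ∀ i j, G.Adj i j → y' i j * y' j i = 1)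
    (hsum : ∀ j, ∑ i ∈ univ.filter (fun i => G.Adj i j), y i j =
      ∑ i ∈ univ.filter (fun i => G.Adj i j), y' i j)
    {i j : V} (hij : G.Adj i j) : y i j = y' i j := by
  classical
  have hrest : ∀ k ∈ (univ.filter (fun k => G.Adj k j)).erase i, y k j = y' k j := by
    intro k hk
    obtain ⟨hki, hkj⟩ : k ≠ i ∧ G.Adj k j := by simpa using hk
    have hdec := hG.branch_ssubset_branch hij hkj hki
    rw [eq_inv_of_mul_eq_one_left (hy k j hkj), eq_inv_of_mul_eq_one_left (hy' k j hkj),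
      hG.eq_of_mul_eq_one_of_sum_eq hy hy' hsum hkj.symm]
  have hi : i ∈ univ.filter (fun k => G.Adj k j) := by simpa using hij
  have hj := hsum j
  rw [← add_sum_erase _ _ hi, ← add_sum_erase _ _ hi, sum_congr rfl hrest] at hj
  exact add_right_cancel hj
termination_by (G.branch i j).ncard
decreasing_by exact Set.ncard_lt_ncard hdec (Set.toFinite _)

end SimpleGraph

theorem stmt_3_general {I : Type*} [Fintype I]
    (T : SimpleGraph I) [DecidableRel T.Adj] (htree : T.IsTree)
    (lam : I → ℂ)
    (y y' : I → I → ℂ)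
    (hy1 : ∀ i j, T.Adj i j → y i j * y j i = 1)
    (hy2 : ∀ j, ∑ i ∈ Finset.univ.filter (fun i => T.Adj i j), y i j = lam j)
    (hy'1 : ∀ i j, T.Adj i j → y' i j * y' j i = 1)
    (hy'2 : ∀ j, ∑ i ∈ Finset.univ.filter (fun i => T.Adj i j), y' i j = lam j) :
    ∀ i j, T.Adj i j → y i j = y' i j :=
  fun _ _ hij => htree.isAcyclic.eq_of_mul_eq_one_of_sum_eq hy1 hy'1
    (fun j => (hy2 j).trans (hy'2 j).symm) hij

/-- Let `T` be a tree on a finite nonempty vertex set `I` and let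
`(λ_j)_{j ∈ I}` be complex numbers. Then the system `y i j * y j i = 1` for adjacent
`i, j` and `∑_{i adjacent to j} y i j = λ_j` for every `j` has at most one solution
(in the variables `y i j` for adjacent pairs `(i, j)`). -/
theorem stmt_3 {I : Type*} [Fintype I] [Nonempty I] [DecidableEq I]
    (T : SimpleGraph I) [DecidableRel T.Adj] (htree : T.IsTree)
    (lam : I → ℂ)
    (y y' : I → I → ℂ)
    (hy1 : ∀ i j, T.Adj i j → y i j * y j i = 1)
    (hy2 : ∀ j, ∑ i ∈ Finset.univ.filter (fun i => T.Adj i j), y i j = lam j)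
    (hy'1 : ∀ i j, T.Adj i j → y' i j * y' j i = 1)
    (hy'2 : ∀ j, ∑ i ∈ Finset.univ.filter (fun i => T.Adj i j), y' i j = lam j) :
    ∀ i j, T.Adj i j → y i j = y' i j :=
  stmt_3_general T htree lam y y' hy1 hy2 hy'1 hy'2
end

section
/- Let Γ = (I, {a_ij}) be a generalized tree with adjacency matrix A = (a_ij) and let λ ∈ ℂ. Then system (4) for Γ and λ has a solution if and only if λ is a nondegenerate eigenvalue of A (i.e. there exists a vector (r_i)_{i∈I} over ℂ with A r = λ r and r_i ≠ 0 for all i). Moreover, if a solution exists, it is unique. -/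
/-- Product of `y u v` over the consecutive vertex pairs of a walk. -/
noncomputable def wprod {I : Type*} {G : SimpleGraph I} (y : I → I → ℂ) :
    {u v : I} → G.Walk u v → ℂ
  | _, _, SimpleGraph.Walk.nil => 1
  | u, _, SimpleGraph.Walk.cons (v := w) _ q => y u w * wprod y q

@[simp] lemma wprod_nil {I : Type*} {G : SimpleGraph I} (y : I → I → ℂ) {u : I} :
    wprod (SimpleGraph.Walk.nil : G.Walk u u) (y := y) = 1 := rfl

@[simp] lemma wprod_cons {I : Type*} {G : SimpleGraph I} (y : I → I → ℂ) {u v w : I}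
    (h : G.Adj u v) (q : G.Walk v w) :
    wprod y (SimpleGraph.Walk.cons h q) = y u v * wprod y q := rfl

lemma wprod_ne_zero {I : Type*} {G : SimpleGraph I} (y : I → I → ℂ)
    (hy : ∀ i j, G.Adj i j → y i j ≠ 0) :
    ∀ {u v : I} (w : G.Walk u v), wprod y w ≠ 0
  | _, _, SimpleGraph.Walk.nil => one_ne_zero
  | _, _, SimpleGraph.Walk.cons h q => mul_ne_zero (hy _ _ h) (wprod_ne_zero y hy q)

/-- For a generalized tree `Γ = (I, a)` with adjacency matrix `A` and
`λ ∈ ℂ`, system (4) — `y i j * y j i = 1` for each pair `i ≠ j` with `a i j = 1` and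
`∑_{i ≠ j, a i j = 1} y i j = λ - a j j` for every vertex `j` — has a solution iff `λ` is
a nondegenerate eigenvalue of `A` (it admits an eigenvector with all coordinates nonzero);
moreover any two solutions coincide (on the relevant variables). -/
theorem stmt_4 {I : Type*} [Fintype I] [Nonempty I] [DecidableEq I]
    (a : I → I → ℕ) (hsymm : ∀ i j, a i j = a j i) (hle : ∀ i j, a i j ≤ 1)
    (G : SimpleGraph I) (hG : ∀ i j, G.Adj i j ↔ i ≠ j ∧ a i j = 1)
    (htree : G.IsTree)
    (A : Matrix I I ℂ) (hA : ∀ i j, A i j = (a i j : ℂ))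
    (lam : ℂ) :
    ((∃ y : I → I → ℂ,
        (∀ i j, i ≠ j → a i j = 1 → y i j * y j i = 1) ∧
        (∀ j, ∑ i ∈ Finset.univ.filter (fun i => i ≠ j ∧ a i j = 1), y i j
            = lam - (a j j : ℂ))) ↔
      (∃ r : I → ℂ, A.mulVec r = lam • r ∧ ∀ i, r i ≠ 0)) ∧
    (∀ y y' : I → I → ℂ,
      ((∀ i j, i ≠ j → a i j = 1 → y i j * y j i = 1) ∧
        (∀ j, ∑ i ∈ Finset.univ.filter (fun i => i ≠ j ∧ a i j = 1), y i j
            = lam - (a j j : ℂ))) →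
      ((∀ i j, i ≠ j → a i j = 1 → y' i j * y' j i = 1) ∧
        (∀ j, ∑ i ∈ Finset.univ.filter (fun i => i ≠ j ∧ a i j = 1), y' i j
            = lam - (a j j : ℂ))) →
      ∀ i j, i ≠ j → a i j = 1 → y i j = y' i j) := by
  classical
  obtain ⟨root⟩ := (inferInstance : Nonempty I)
  choose p hp hup using fun v => htree.existsUnique_path v root
  have huniq : ∀ (v w : I) (q q' : G.Walk v w), q.IsPath → q'.IsPath → q = q' := by
    intro v w q q' h h'
    exact (htree.existsUnique_path v w).unique h h'
  -- structural dichotomy for edges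
  have hstep : ∀ i j, G.Adj i j →
      (∃ h : G.Adj i j, p i = SimpleGraph.Walk.cons h (p j)) ∨
      (∃ h : G.Adj j i, p j = SimpleGraph.Walk.cons h (p i)) := by
    intro i j hadj
    by_cases hi : i ∈ (p j).support
    · right
      refine ⟨hadj.symm, ?_⟩
      have ht : (p j).takeUntil i hi = SimpleGraph.Walk.cons hadj.symm SimpleGraph.Walk.nil := by
        exact huniq j i _ _ ((hp j).takeUntil hi)
          (SimpleGraph.Path.singleton hadj.symm).2
      calc p j = ((p j).takeUntil i hi).append ((p j).dropUntil i hi) :=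
            ((p j).take_spec hi).symm
        _ = SimpleGraph.Walk.cons hadj.symm ((p j).dropUntil i hi) := by
            rw [ht, SimpleGraph.Walk.cons_append, SimpleGraph.Walk.nil_append]
        _ = SimpleGraph.Walk.cons hadj.symm (p i) := by
            rw [hup i _ ((hp j).dropUntil hi)]
    · left
      exact ⟨hadj, (hup i _ ((hp j).cons hi)).symm⟩
  -- the basic sum manipulation
  have hsum : ∀ (f : I → ℂ) (j : I),
      (∑ i, (a j i : ℂ) * f i)
        = (a j j : ℂ) * f j + ∑ i ∈ Finset.univ.filter (fun i => i ≠ j ∧ a i j = 1), f i := by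
    intro f j
    rw [← Finset.add_sum_erase Finset.univ (fun i => (a j i : ℂ) * f i) (Finset.mem_univ j)]
    congr 1
    have hsub : (Finset.univ.filter (fun i => i ≠ j ∧ a i j = 1)) ⊆ Finset.univ.erase j := by
      intro i hi
      simp only [Finset.mem_filter] at hi
      exact Finset.mem_erase.2 ⟨hi.2.1, Finset.mem_univ i⟩
    rw [← Finset.sum_subset hsub]
    · refine (Finset.sum_congr rfl ?_).symm
      intro i hi
      simp only [Finset.mem_filter] at hi
      rw [hsymm j i, hi.2.2]
      simp
    · intro i hi hni
      simp only [Finset.mem_erase] at hi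
      simp only [Finset.mem_filter, Finset.mem_univ, true_and, not_and] at hni
      have h0 : a i j = 0 := by
        have := hle i j
        have := hni hi.1
        omega
      rw [hsymm j i, h0]
      simp
  -- From a solution to a nondegenerate eigenvector
  have fwd : ∀ y : I → I → ℂ,
      (∀ i j, i ≠ j → a i j = 1 → y i j * y j i = 1) →
      (∀ j, ∑ i ∈ Finset.univ.filter (fun i => i ≠ j ∧ a i j = 1), y i j
          = lam - (a j j : ℂ)) →
      ∃ r : I → ℂ, A.mulVec r = lam • r ∧ ∀ i, r i ≠ 0 := by
    intro y hy1 hy2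
    have hy0 : ∀ i j, G.Adj i j → y i j ≠ 0 := by
      intro i j hadj h0
      obtain ⟨hne, h1⟩ := (hG i j).1 hadj
      have := hy1 i j hne h1
      rw [h0, zero_mul] at this
      exact zero_ne_one this
    set r : I → ℂ := fun v => wprod y (p v) with hr
    have hr0 : ∀ v, r v ≠ 0 := fun v => wprod_ne_zero y hy0 (p v)
    have hrel : ∀ i j, G.Adj i j → r i = y i j * r j := by
      intro i j hadj
      rcases hstep i j hadj with ⟨h, he⟩ | ⟨h, he⟩
      · show wprod y (p i) = _
        rw [he, wprod_cons]
      · obtain ⟨hne, h1⟩ := (hG i j).1 hadj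
        have hprod := hy1 i j hne h1
        have hj : r j = y j i * r i := by
          show wprod y (p j) = _
          rw [he, wprod_cons]
        rw [hj, ← mul_assoc, hprod, one_mul]
    refine ⟨r, ?_, hr0⟩
    funext j
    have h1 : A.mulVec r j = ∑ i, (a j i : ℂ) * r i := by
      simp [Matrix.mulVec, dotProduct, hA]
    have h2 : ∑ i ∈ Finset.univ.filter (fun i => i ≠ j ∧ a i j = 1), r i
        = (∑ i ∈ Finset.univ.filter (fun i => i ≠ j ∧ a i j = 1), y i j) * r j := by
      rw [Finset.sum_mul]
      refine Finset.sum_congr rfl ?_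
      intro i hi
      simp only [Finset.mem_filter] at hi
      exact hrel i j ((hG i j).2 ⟨hi.2.1, hi.2.2⟩)
    have : A.mulVec r j = lam * r j := by
      rw [h1, hsum r j, h2, hy2 j]
      ring
    simpa using this
  refine ⟨⟨fun ⟨y, hy1, hy2⟩ => fwd y hy1 hy2, ?_⟩, ?_⟩
  · -- eigenvector to solution
    rintro ⟨r, heig, hr0⟩
    refine ⟨fun i j => r i * (r j)⁻¹, ?_, ?_⟩
    · intro i j _ _
      field_simp [hr0 i, hr0 j]
    · intro j
      have hm : (a j j : ℂ) * r j
            + ∑ i ∈ Finset.univ.filter (fun i => i ≠ j ∧ a i j = 1), r i = lam * r j := by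
        rw [← hsum r j]
        have h1 : A.mulVec r j = ∑ i, (a j i : ℂ) * r i := by
          simp [Matrix.mulVec, dotProduct, hA]
        rw [← h1, heig]
        simp
      have h2 : ∑ i ∈ Finset.univ.filter (fun i => i ≠ j ∧ a i j = 1), r i
          = (lam - (a j j : ℂ)) * r j := by
        linear_combination hm
      rw [← Finset.sum_mul, h2, mul_assoc, mul_inv_cancel₀ (hr0 j), mul_one]
  · -- uniqueness
    rintro y y' ⟨hy1, hy2⟩ ⟨hy'1, hy'2⟩
    have hy0 : ∀ i j, i ≠ j → a i j = 1 → y i j ≠ 0 := by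
      intro i j hne h1 h0
      have := hy1 i j hne h1
      rw [h0, zero_mul] at this
      exact zero_ne_one this
    have key : ∀ n : ℕ, ∀ v u (h : G.Adj v u), p v = SimpleGraph.Walk.cons h (p u) →
        Fintype.card I - (p v).length ≤ n → y u v = y' u v := by
      intro n
      induction n with
      | zero =>
        intro v u h hpv hlen
        exact absurd hlen (by have := (hp v).length_lt; omega)
      | succ n ih =>
        intro v u hadj hpv hlen
        have hvu := (hG v u).1 hadj
        have hmem : u ∈ Finset.univ.filter (fun i => i ≠ v ∧ a i v = 1) := by
          simp only [Finset.mem_filter, Finset.mem_univ, true_and]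
          exact ⟨hvu.1.symm, by rw [← hsymm]; exact hvu.2⟩
        have e1 := hy2 v
        have e2 := hy'2 v
        rw [← Finset.add_sum_erase _ _ hmem] at e1 e2
        have hs : ∑ i ∈ (Finset.univ.filter (fun i => i ≠ v ∧ a i v = 1)).erase u, y i v
            = ∑ i ∈ (Finset.univ.filter (fun i => i ≠ v ∧ a i v = 1)).erase u, y' i v := by
          refine Finset.sum_congr rfl ?_
          intro k hk
          simp only [Finset.mem_erase, Finset.mem_filter, Finset.mem_univ, true_and] at hk
          obtain ⟨hku, hkv, hakv⟩ := hk
          have hadjkv : G.Adj k v := (hG k v).2 ⟨hkv, hakv⟩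
          have hpk : ∃ h : G.Adj k v, p k = SimpleGraph.Walk.cons h (p v) := by
            rcases hstep k v hadjkv with h | ⟨h, he⟩
            · exact h
            · exfalso
              have h1 : (p v).getVert 1 = k := by
                rw [he]
                rw [show (1 : ℕ) = 0 + 1 from rfl, SimpleGraph.Walk.getVert_cons_succ,
                  SimpleGraph.Walk.getVert_zero]
              have h2 : (p v).getVert 1 = u := by
                rw [hpv]
                rw [show (1 : ℕ) = 0 + 1 from rfl, SimpleGraph.Walk.getVert_cons_succ,
                  SimpleGraph.Walk.getVert_zero]
              exact hku (h1.symm.trans h2)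
          obtain ⟨h, he⟩ := hpk
          have hlenk : Fintype.card I - (p k).length ≤ n := by
            have : (p k).length = (p v).length + 1 := by
              rw [he, SimpleGraph.Walk.length_cons]
            omega
          have hvk := ih k v h he hlenk
          have hvkne : v ≠ k := hkv.symm
          have havk : a v k = 1 := by rw [hsymm]; exact hakv
          have e := hy1 v k hvkne havk
          have e' := hy'1 v k hvkne havk
          calc y k v = y k v * (y' v k * y' k v) := by rw [e', mul_one]
            _ = (y v k * y k v) * y' k v := by rw [← hvk]; ring
            _ = y' k v := by rw [e, one_mul]
        linear_combination e1 - e2 - hs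
    intro i j hne hij
    have hadj : G.Adj i j := (hG i j).2 ⟨hne, hij⟩
    rcases hstep i j hadj with ⟨h, he⟩ | ⟨h, he⟩
    · have hji := key (Fintype.card I) i j h he (Nat.sub_le _ _)
      have e := hy1 i j hne hij
      have e' := hy'1 i j hne hij
      calc y i j = y i j * (y' i j * y' j i) := by rw [e', mul_one]
        _ = (y i j * y j i) * y' i j := by rw [← hji]; ring
        _ = y' i j := by rw [e, one_mul]
    · exact key (Fintype.card I) j i h he (Nat.sub_le _ _)
end

section
/- Let Γ = (I, {a_ij}) be a generalized tree and let q be a nonzero complex number. If system (4) for Γ with λ = −q − q^{-1} has a solution, then either |q| = 1 or q is real. -/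
/-!
Since `y i j * y j i = 1` along every edge and a tree has no cycles, multiplying the `y`'s along
the path from a fixed root gives nowhere-vanishing `x` with `x i = y i j * x j` on edges. System
(4) then says exactly that `x` is an eigenvector of the real symmetric matrix `(a i j)` with
eigenvalue `λ = -q - q⁻¹`, so `λ` is real; and `Im (q + q⁻¹) = Im q * (1 - |q|⁻²)`.
-/

open Finset Matrix

namespace SimpleGraph

variable {V : Type*} {G : SimpleGraph V}

theorem IsTree.darts_eq_append_of_adj (hG : G.IsTree) {r i j : V} {p : G.Walk r i}
    {p' : G.Walk r j} (hp : p.IsPath) (hp' : p'.IsPath) (h : G.Adj i j) :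
    p'.darts = p.darts ++ [⟨(i, j), h⟩] ∨ p.darts = p'.darts ++ [⟨(j, i), h.symm⟩] := by
  classical
  by_cases hj : j ∈ p.support
  · right
    have hdrop : p.dropUntil j hj = .cons h.symm .nil :=
      (hG.existsUnique_path j i).unique (hp.dropUntil hj) (by simp [h.ne'])
    have htake : p.takeUntil j hj = p' :=
      (hG.existsUnique_path r j).unique (hp.takeUntil hj) hp'
    rw [← p.take_spec hj, Walk.darts_append, htake, hdrop]
    rfl
  · left
    rw [(hG.existsUnique_path r j).unique hp' (hp.concat hj h), Walk.darts_concat,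
      List.concat_eq_append]

theorem IsTree.exists_ne_zero_and_eq_mul {K : Type*} [CommGroupWithZero K] (hG : G.IsTree)
    {y : V → V → K} (hy : ∀ ⦃i j⦄, G.Adj i j → y i j * y j i = 1) :
    ∃ x : V → K, (∀ v, x v ≠ 0) ∧ ∀ ⦃i j⦄, G.Adj i j → x i = y i j * x j := by
  obtain ⟨r⟩ := hG.connected.nonempty
  choose p hp using fun v => (hG.existsUnique_path r v).exists
  refine ⟨fun v => ((p v).darts.map fun d => y d.snd d.fst).prod, fun v => ?_, fun i j h => ?_⟩
  · refine List.prod_ne_zero fun h0 => ?_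
    obtain ⟨d, -, hd⟩ := List.mem_map.1 h0
    simpa [hd] using hy d.adj.symm
  · rcases hG.darts_eq_append_of_adj (hp i) (hp j) h with hdarts | hdarts
    · simp only [hdarts, List.map_append, List.prod_append, List.map_singleton,
        List.prod_singleton]
      rw [mul_left_comm, hy h, mul_one]
    · simp [hdarts, mul_comm]

end SimpleGraph

theorem sum_natCast_mul_eq_sum_filter_add {I R : Type*} [Fintype I] [DecidableEq I] [Semiring R]
    {a : I → I → ℕ} (hle : ∀ i j, a i j ≤ 1) (x : I → R) (j : I) :
    ∑ i, (a i j : R) * x i = ∑ i ∈ univ.filter (fun i => i ≠ j ∧ a i j = 1), x i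
      + a j j * x j := by
  rw [← sum_filter_add_sum_filter_not univ (fun i => i ≠ j ∧ a i j = 1)]
  congr 1
  · exact sum_congr rfl fun i hi => by simp [(mem_filter.1 hi).2.2]
  · refine sum_eq_single_of_mem j (by simp) fun i hi hij => ?_
    have : a i j ≠ 1 := fun h1 => (mem_filter.1 hi).2 ⟨hij, h1⟩
    simp [Nat.lt_one_iff.1 (lt_of_le_of_ne (hle i j) this)]

theorem Matrix.IsHermitian.conj_eq_self_of_mulVec_eq_smul {𝕜 n : Type*} [RCLike 𝕜] [Fintype n]
    [DecidableEq n] {A : Matrix n n 𝕜} (hA : A.IsHermitian) {μ : 𝕜} {x : n → 𝕜} (hx : x ≠ 0)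
    (h : A *ᵥ x = μ • x) : starRingEnd 𝕜 μ = μ := by
  refine (Matrix.isSymmetric_toEuclideanLin_iff.2 hA).conj_eigenvalue_eq_self
    (Module.End.hasEigenvalue_of_hasEigenvector (x := WithLp.toLp 2 x) ⟨?_, ?_⟩)
  · rw [Module.End.mem_eigenspace_iff]
    exact congrArg (WithLp.toLp 2) h
  · simpa using hx

theorem Complex.norm_eq_one_or_im_eq_zero_of_im_add_inv {q : ℂ} (h : (q + q⁻¹).im = 0) :
    ‖q‖ = 1 ∨ q.im = 0 := by
  rcases eq_or_ne q 0 with rfl | hq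
  · simp
  have hn : Complex.normSq q ≠ 0 := (Complex.normSq_pos.2 hq).ne'
  rw [Complex.add_im, Complex.inv_im] at h
  have key : q.im * (Complex.normSq q - 1) = 0 := by
    field_simp at h
    linear_combination h
  rcases mul_eq_zero.1 key with h | h
  · exact Or.inr h
  · left
    rw [Complex.norm_def, sub_eq_zero.1 h, Real.sqrt_one]

theorem stmt_6_general {I : Type*} [Fintype I] [DecidableEq I]
    (a : I → I → ℕ) (hsymm : ∀ i j, a i j = a j i) (hle : ∀ i j, a i j ≤ 1)
    (G : SimpleGraph I) (hG : ∀ i j, G.Adj i j ↔ i ≠ j ∧ a i j = 1)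
    (htree : G.IsTree)
    (q : ℂ)
    (hsol : ∃ y : I → I → ℂ,
      (∀ i j, i ≠ j → a i j = 1 → y i j * y j i = 1) ∧
      (∀ j, ∑ i ∈ Finset.univ.filter (fun i => i ≠ j ∧ a i j = 1), y i j
          = (-q - q⁻¹) - (a j j : ℂ))) :
    ‖q‖ = 1 ∨ q.im = 0 := by
  obtain ⟨y, hyy, hysum⟩ := hsol
  obtain ⟨x, hx0, hxy⟩ := htree.exists_ne_zero_and_eq_mul (y := y) fun i j h =>
    hyy i j ((hG i j).1 h).1 ((hG i j).1 h).2
  let A : Matrix I I ℂ := Matrix.of fun i j => (a i j : ℂ)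
  have hA : A.IsHermitian := by
    ext i j
    simp [A, hsymm]
  have hAx : A *ᵥ x = (-q - q⁻¹) • x := by
    funext j
    have hrow : ∑ i ∈ univ.filter (fun i => i ≠ j ∧ a i j = 1), x i
        = (-q - q⁻¹ - a j j) * x j := by
      rw [← hysum j, sum_mul]
      exact sum_congr rfl fun i hi => hxy ((hG i j).2 (mem_filter.1 hi).2)
    simp only [mulVec, dotProduct, A, of_apply, hsymm j, Pi.smul_apply, smul_eq_mul]
    rw [sum_natCast_mul_eq_sum_filter_add hle, hrow]
    ring
  have hx : x ≠ 0 := fun h => hx0 htree.connected.nonempty.some (congrFun h _)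
  have hreal := congrArg Complex.im (hA.conj_eq_self_of_mulVec_eq_smul hx hAx)
  refine Complex.norm_eq_one_or_im_eq_zero_of_im_add_inv ?_
  simp only [Complex.conj_im, Complex.sub_im, Complex.neg_im, Complex.add_im] at hreal ⊢
  linarith

/-- Let `Γ = (I, a)` be a generalized tree and let `q` be a nonzero complex
number. If system (4) for `Γ` with `λ = -q - q⁻¹` has a solution, then either `|q| = 1`
or `q` is real. -/
theorem stmt_6 {I : Type*} [Fintype I] [Nonempty I] [DecidableEq I]
    (a : I → I → ℕ) (hsymm : ∀ i j, a i j = a j i) (hle : ∀ i j, a i j ≤ 1)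
    (G : SimpleGraph I) (hG : ∀ i j, G.Adj i j ↔ i ≠ j ∧ a i j = 1)
    (htree : G.IsTree)
    (q : ℂ) (hq : q ≠ 0)
    (hsol : ∃ y : I → I → ℂ,
      (∀ i j, i ≠ j → a i j = 1 → y i j * y j i = 1) ∧
      (∀ j, ∑ i ∈ Finset.univ.filter (fun i => i ≠ j ∧ a i j = 1), y i j
          = (-q - q⁻¹) - (a j j : ℂ))) :
    ‖q‖ = 1 ∨ q.im = 0 :=
  stmt_6_general a hsymm hle G hG htree q hsol
end

section
/- Let Γ = (I, {a_ij}) be a graph (finite nonempty set I, symmetric a : I × I → ℕ) and suppose λ ∈ ℂ is a nondegenerate eigenvalue of the adjacency matrix A = (a_ij), i.e. there is a vector (r_i)_{i∈I} over ℂ with A r = λ r and r_i ≠ 0 for all i. Then the main equation for Γ and λ has a solution: there exist invertible complex a_ij × a_ji matrices E_ij (for all i, j ∈ I) such that for every i ∈ I, ∑_{j∈I} Tr(E_ij · ((E_ji)^T)^{-1}) = λ. -/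
open Matrix

/-- A solution of the main equation (3) for the graph `Γ = (I, a)` and parameter `λ`:
a collection of invertible complex `a i j × a j i` matrices `E i j` (invertibility is
witnessed by two-sided inverses `B i j`, so that `(B j i)ᵀ = ((E j i)ᵀ)⁻¹`) such that
for every `i ∈ I`, `∑_j Tr (E i j * ((E j i)ᵀ)⁻¹) = λ`. -/
def MainEqSolvable {I : Type*} [Fintype I] (a : I → I → ℕ) (lam : ℂ) : Prop :=
  ∃ (E : ∀ i j : I, Matrix (Fin (a i j)) (Fin (a j i)) ℂ)
    (B : ∀ i j : I, Matrix (Fin (a j i)) (Fin (a i j)) ℂ),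
    (∀ i j, E i j * B i j = 1 ∧ B i j * E i j = 1) ∧
    (∀ i, ∑ j, (E i j * (B j i)ᵀ).trace = lam)


noncomputable def Jmat (m n : ℕ) : Matrix (Fin m) (Fin n) ℂ :=
  Matrix.of fun p q => if (p : ℕ) = (q : ℕ) then 1 else 0

lemma Jmat_transpose (m n : ℕ) : (Jmat m n)ᵀ = Jmat n m := by
  ext p q; simp [Jmat, Matrix.transpose_apply, eq_comm]

lemma Jmat_mul (m n : ℕ) (h : m = n) : Jmat m n * Jmat n m = 1 := by
  subst h
  ext p q
  simp only [Jmat, Matrix.mul_apply, Matrix.of_apply, Matrix.one_apply, Fin.ext_iff]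
  rw [Finset.sum_eq_single p]
  · simp
  · intro k _ hk
    rw [if_neg (fun h' : (p:ℕ) = (k:ℕ) => hk (Fin.ext h'.symm)), zero_mul]
  · simp

lemma Jmat_trace (m : ℕ) : (Jmat m m).trace = m := by
  simp [Jmat, Matrix.trace, Matrix.diag]

theorem stmt_7' {I : Type*} [Fintype I] [Nonempty I] [DecidableEq I]
    (a : I → I → ℕ) (hsymm : ∀ i j, a i j = a j i)
    (A : Matrix I I ℂ) (hA : ∀ i j, A i j = (a i j : ℂ))
    (lam : ℂ) (r : I → ℂ) (hr : A.mulVec r = lam • r) (hr0 : ∀ i, r i ≠ 0) :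
    ∃ (E : ∀ i j : I, Matrix (Fin (a i j)) (Fin (a j i)) ℂ)
    (B : ∀ i j : I, Matrix (Fin (a j i)) (Fin (a i j)) ℂ),
    (∀ i j, E i j * B i j = 1 ∧ B i j * E i j = 1) ∧
    (∀ i, ∑ j, (E i j * (B j i)ᵀ).trace = lam) := by
  refine ⟨fun i j => r j • Jmat (a i j) (a j i),
          fun i j => (r j)⁻¹ • Jmat (a j i) (a i j), ?_, ?_⟩
  · intro i j
    constructor
    · rw [Matrix.smul_mul, Matrix.mul_smul, smul_smul,
        mul_inv_cancel₀ (hr0 j), Jmat_mul _ _ (hsymm i j), one_smul]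
    · rw [Matrix.smul_mul, Matrix.mul_smul, smul_smul,
        inv_mul_cancel₀ (hr0 j), Jmat_mul _ _ (hsymm j i), one_smul]
  · intro i
    have key : ∀ j, ((r j • Jmat (a i j) (a j i)) *
        ((r i)⁻¹ • Jmat (a i j) (a j i))ᵀ).trace = (a i j : ℂ) * r j / r i := by
      intro j
      rw [Matrix.transpose_smul, Jmat_transpose, Matrix.smul_mul, Matrix.mul_smul,
        smul_smul, Jmat_mul _ _ (hsymm i j)]
      rw [Matrix.trace_smul, Matrix.trace_one]
      simp only [Fintype.card_fin, smul_eq_mul]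
      ring
    simp only [key]
    have h := congrFun hr i
    simp only [Matrix.mulVec, dotProduct, Pi.smul_apply, smul_eq_mul, hA] at h
    rw [← Finset.sum_div, h, mul_comm lam (r i), mul_div_assoc]
    rw [mul_comm, div_mul_cancel₀ lam (hr0 i)]

/-- If `λ ∈ ℂ` is a nondegenerate eigenvalue of the adjacency matrix of a
graph `Γ = (I, a)` (i.e. it admits an eigenvector with all coordinates nonzero), then the
main equation for `Γ` and `λ` has a solution. -/
theorem stmt_7 {I : Type*} [Fintype I] [Nonempty I] [DecidableEq I]
    (a : I → I → ℕ) (hsymm : ∀ i j, a i j = a j i)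
    (A : Matrix I I ℂ) (hA : ∀ i j, A i j = (a i j : ℂ))
    (lam : ℂ) (r : I → ℂ) (hr : A.mulVec r = lam • r) (hr0 : ∀ i, r i ≠ 0) :
    MainEqSolvable a lam :=
  stmt_7' a hsymm A hA lam r hr hr0
end

section
/- Let Γ = (I, {a_ij}) be a connected graph: a finite nonempty set I with a symmetric matrix a : I × I → ℕ such that for all i, j ∈ I there exists n ≥ 1 with (A^n)_{ij} > 0, where A = (a_ij). Then there exists a nonzero complex number q with q^2 ≠ −1 such that the main equation for Γ and λ = −q − q^{-1} has a solution. -/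
/-
Perron–Frobenius for symmetric matrices: if `v` is an eigenvector of the top eigenvalue `μ` of the
adjacency matrix, then `|v|` has at least the same Rayleigh quotient, hence is again a top
eigenvector, and connectivity forces `|v| > 0` and `μ > 0`. With `d = |v|`, the matrices
`E i j = d j • 1` (and `B i j = (d j)⁻¹ • 1`) turn the `i`-th main equation into
`∑ j, a i j * d j / d i = μ`. Finally `q` is a root of `q ^ 2 + μ q + 1 = 0`; as `μ ≠ 0`,
`q ≠ 0` and `q ^ 2 ≠ -1`.
-/

open Matrix

namespace Matrix

variable {n : Type*} [Fintype n] [DecidableEq n]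

open scoped MatrixOrder in
lemma IsHermitian.posSemidef_smul_one_sub {A : Matrix n n ℝ} (hA : A.IsHermitian) {μ : ℝ}
    (hμ : ∀ i, hA.eigenvalues i ≤ μ) : (μ • 1 - A).PosSemidef := by
  rw [← Algebra.algebraMap_eq_smul_one]
  refine le_algebraMap_of_spectrum_le ?_ hA
  rw [hA.spectrum_real_eq_range_eigenvalues]
  rintro _ ⟨i, rfl⟩
  exact hμ i

lemma IsHermitian.dotProduct_mulVec_le {A : Matrix n n ℝ} (hA : A.IsHermitian) {μ : ℝ}
    (hμ : ∀ i, hA.eigenvalues i ≤ μ) (x : n → ℝ) : x ⬝ᵥ A *ᵥ x ≤ μ * (x ⬝ᵥ x) := by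
  have := (hA.posSemidef_smul_one_sub hμ).dotProduct_mulVec_nonneg x
  simp only [star_trivial, sub_mulVec, smul_mulVec, one_mulVec, dotProduct_sub,
    dotProduct_smul, smul_eq_mul] at this
  linarith

lemma IsHermitian.mulVec_eq_smul_of_dotProduct_mulVec_eq {A : Matrix n n ℝ} (hA : A.IsHermitian)
    {μ : ℝ} (hμ : ∀ i, hA.eigenvalues i ≤ μ) {x : n → ℝ}
    (hx : x ⬝ᵥ A *ᵥ x = μ * (x ⬝ᵥ x)) : A *ᵥ x = μ • x := by
  have := ((hA.posSemidef_smul_one_sub hμ).dotProduct_mulVec_zero_iff x).1 (by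
    simp only [star_trivial, sub_mulVec, smul_mulVec, one_mulVec, dotProduct_sub,
      dotProduct_smul, smul_eq_mul, hx, sub_self])
  rwa [sub_mulVec, smul_mulVec, one_mulVec, sub_eq_zero, eq_comm] at this

lemma IsHermitian.exists_nonneg_eigenvector [Nonempty n] {A : Matrix n n ℝ} (hA : A.IsHermitian)
    (hnonneg : ∀ i j, 0 ≤ A i j) :
    ∃ (μ : ℝ) (u : n → ℝ), (∀ i, 0 ≤ u i) ∧ u ≠ 0 ∧ A *ᵥ u = μ • u := by
  obtain ⟨i₀, -, hmax⟩ := Finset.univ.exists_max_image hA.eigenvalues Finset.univ_nonempty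
  have hμ : ∀ i, hA.eigenvalues i ≤ hA.eigenvalues i₀ := fun i => hmax i (Finset.mem_univ i)
  set v : n → ℝ := ⇑(hA.eigenvectorBasis i₀)
  have hv0 : v ≠ 0 := fun h => hA.eigenvectorBasis.orthonormal.ne_zero i₀ (by ext i; simp [v, h])
  have hAv : A *ᵥ v = hA.eigenvalues i₀ • v := hA.mulVec_eigenvectorBasis i₀
  set u : n → ℝ := fun i => |v i|
  have huu : u ⬝ᵥ u = v ⬝ᵥ v :=
    Finset.sum_congr rfl fun i _ => abs_mul_abs_self (v i)
  have hvu : v ⬝ᵥ A *ᵥ v ≤ u ⬝ᵥ A *ᵥ u := by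
    simp only [dotProduct, mulVec, Finset.mul_sum]
    refine Finset.sum_le_sum fun i _ => Finset.sum_le_sum fun j _ => ?_
    calc v i * (A i j * v j) = A i j * (v i * v j) := by ring
      _ ≤ A i j * (u i * u j) :=
        mul_le_mul_of_nonneg_left ((le_abs_self _).trans (abs_mul _ _).le) (hnonneg i j)
      _ = u i * (A i j * u j) := by ring
  refine ⟨hA.eigenvalues i₀, u, fun i => abs_nonneg _, ?_,
    hA.mulVec_eq_smul_of_dotProduct_mulVec_eq hμ ?_⟩
  · exact fun h => hv0 (funext fun i => abs_eq_zero.1 (congrFun h i))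
  · refine le_antisymm (hA.dotProduct_mulVec_le hμ u) ?_
    rw [huu, ← smul_eq_mul, ← dotProduct_smul, ← hAv]
    exact hvu

lemma pow_mulVec_eq_smul {R : Type*} [CommSemiring R] {A : Matrix n n R} {μ : R}
    {u : n → R} (hAu : A *ᵥ u = μ • u) (k : ℕ) : (A ^ k) *ᵥ u = μ ^ k • u := by
  induction k with
  | zero => simp
  | succ k ih => rw [pow_succ, ← mulVec_mulVec, hAu, mulVec_smul, ih, smul_smul, pow_succ']

section Nonneg

variable {R : Type*} [CommRing R] [LinearOrder R] [IsStrictOrderedRing R]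
  {A : Matrix n n R} {μ : R} {u : n → R}

lemma pow_apply_mul_le_of_mulVec_eq_smul (hA : ∀ i j, 0 ≤ A i j) (hu : ∀ i, 0 ≤ u i)
    (hAu : A *ᵥ u = μ • u) (k : ℕ) (i j : n) : (A ^ k) i j * u j ≤ μ ^ k * u i := by
  calc (A ^ k) i j * u j ≤ ((A ^ k) *ᵥ u) i :=
        Finset.single_le_sum (fun l _ => mul_nonneg (pow_apply_nonneg hA k i l) (hu l))
          (Finset.mem_univ j)
    _ = μ ^ k * u i := by rw [pow_mulVec_eq_smul hAu, Pi.smul_apply, smul_eq_mul]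

lemma IsIrreducible.pos_of_mulVec_eq_smul (hirr : A.IsIrreducible) (hu : ∀ i, 0 ≤ u i)
    (hu0 : u ≠ 0) (hAu : A *ᵥ u = μ • u) : 0 < μ ∧ ∀ i, 0 < u i := by
  obtain ⟨i₀, hi₀⟩ : ∃ i, 0 < u i := by
    by_contra! h
    exact hu0 (funext fun i => le_antisymm (h i) (hu i))
  have hreach : ∀ j, ∃ k, 0 < k ∧ 0 < μ ^ k * u j := fun j => by
    obtain ⟨k, hk, hpos⟩ := (isIrreducible_iff_exists_pow_pos hirr.nonneg).1 hirr j i₀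
    exact ⟨k, hk, (mul_pos hpos hi₀).trans_le
      (pow_apply_mul_le_of_mulVec_eq_smul hirr.nonneg hu hAu k j i₀)⟩
  have hupos : ∀ j, 0 < u j := fun j => by
    obtain ⟨k, -, hk⟩ := hreach j
    exact (hu j).lt_of_ne fun h => by simp [← h] at hk
  refine ⟨?_, hupos⟩
  have hμ0 : 0 ≤ μ := by
    have h := pow_apply_mul_le_of_mulVec_eq_smul hirr.nonneg hu hAu 1 i₀ i₀
    rw [pow_one, pow_one] at h
    exact nonneg_of_mul_nonneg_left ((mul_nonneg (hirr.nonneg i₀ i₀) (hu i₀)).trans h) hi₀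
  obtain ⟨k, hk, hpos⟩ := hreach i₀
  exact hμ0.lt_of_ne fun h => by simp [← h, zero_pow hk.ne'] at hpos

end Nonneg

lemma IsIrreducible.exists_pos_eigenvector [Nonempty n] {A : Matrix n n ℝ}
    (hA : A.IsHermitian) (hirr : A.IsIrreducible) :
    ∃ (μ : ℝ) (u : n → ℝ), 0 < μ ∧ (∀ i, 0 < u i) ∧ A *ᵥ u = μ • u := by
  obtain ⟨μ, u, hu, hu0, hAu⟩ := hA.exists_nonneg_eigenvector hirr.nonneg
  obtain ⟨hμ, hupos⟩ := hirr.pos_of_mulVec_eq_smul hu hu0 hAu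
  exact ⟨μ, u, hμ, hupos, hAu⟩

-- For `m = n` this is the identity matrix, with row and column types `Fin m` and `Fin n` that
-- are only propositionally equal.
def finDiagOne (R : Type*) [Zero R] [One R] (m n : ℕ) : Matrix (Fin m) (Fin n) R :=
  of fun k l => if (k : ℕ) = l then 1 else 0

section FinDiagOne

variable {R : Type*} [Semiring R]

lemma transpose_finDiagOne (m n : ℕ) : (finDiagOne R m n)ᵀ = finDiagOne R n m := by
  ext k l
  simp [finDiagOne, eq_comm]

lemma finDiagOne_self (n : ℕ) : finDiagOne R n n = 1 := by
  ext k l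
  simp [finDiagOne, one_apply, Fin.val_inj]

lemma finDiagOne_mul_finDiagOne {m n : ℕ} (h : m = n) :
    finDiagOne R m n * finDiagOne R n m = 1 := by
  subst h
  rw [finDiagOne_self, one_mul]

end FinDiagOne

lemma isIrreducible_map_natCast {R : Type*} [CommRing R] [LinearOrder R] [IsStrictOrderedRing R]
    {M : Matrix n n ℕ} (hM : ∀ i j, ∃ k : ℕ, 1 ≤ k ∧ 0 < (M ^ k) i j) :
    (M.map (Nat.cast : ℕ → R)).IsIrreducible := by
  refine (isIrreducible_iff_exists_pow_pos fun i j => Nat.cast_nonneg _).2 fun i j => ?_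
  obtain ⟨k, hk, hpos⟩ := hM i j
  refine ⟨k, hk, ?_⟩
  change 0 < (M.map (Nat.cast : ℕ → R) ^ k) i j
  rw [show M.map (Nat.cast : ℕ → R) ^ k = (M ^ k).map Nat.cast from
    (M.map_pow (Nat.castRingHom R) k).symm, map_apply]
  exact_mod_cast hpos

end Matrix

lemma mainEqSolvable_of_mulVec_eq {I : Type*} [Fintype I] {a : I → I → ℕ}
    (hsymm : ∀ i j, a i j = a j i) {lam : ℂ} {d : I → ℂ} (hd : ∀ i, d i ≠ 0)
    (heig : ∀ i, ∑ j, (a i j : ℂ) * d j = lam * d i) : MainEqSolvable a lam := by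
  have hJ : ∀ i j, finDiagOne ℂ (a i j) (a j i) * finDiagOne ℂ (a j i) (a i j) = 1 :=
    fun i j => finDiagOne_mul_finDiagOne (hsymm i j)
  refine ⟨fun i j => d j • finDiagOne ℂ _ _, fun i j => (d j)⁻¹ • finDiagOne ℂ _ _,
    fun i j => ⟨?_, ?_⟩, fun i => ?_⟩
  · dsimp only
    rw [Matrix.smul_mul, Matrix.mul_smul, smul_smul, mul_inv_cancel₀ (hd j), one_smul, hJ]
  · dsimp only
    rw [Matrix.smul_mul, Matrix.mul_smul, smul_smul, inv_mul_cancel₀ (hd j), one_smul, hJ]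
  · have hterm : ∀ j, (d j • finDiagOne ℂ (a i j) (a j i) *
        ((d i)⁻¹ • finDiagOne ℂ (a i j) (a j i))ᵀ).trace = (a i j : ℂ) * d j * (d i)⁻¹ := by
      intro j
      rw [transpose_smul, transpose_finDiagOne, Matrix.smul_mul, Matrix.mul_smul, smul_smul, hJ,
        trace_smul, trace_one, Fintype.card_fin, smul_eq_mul]
      ring
    rw [Finset.sum_congr rfl fun j _ => hterm j, ← Finset.sum_mul, heig i,
      mul_inv_cancel_right₀ (hd i)]

lemma Complex.exists_neg_sub_inv_eq {lam : ℂ} (hlam : lam ≠ 0) :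
    ∃ q : ℂ, q ≠ 0 ∧ q ^ 2 ≠ -1 ∧ -q - q⁻¹ = lam := by
  obtain ⟨q, hq⟩ := exists_quadratic_eq_zero one_ne_zero (IsAlgClosed.exists_eq_mul_self
    (discrim 1 lam 1))
  have hq0 : q ≠ 0 := by rintro rfl; simp at hq
  refine ⟨q, hq0, fun h => hlam ?_, ?_⟩
  · have : lam * q = 0 := by linear_combination hq - h
    exact (mul_eq_zero.1 this).resolve_right hq0
  · field_simp
    linear_combination -hq

/-- For any connected graph `Γ = (I, a)` (connected: some power of the
adjacency matrix has a positive `(i, j)` entry, for every pair `i, j`) there exists a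
nonzero `q ∈ ℂ` with `q² ≠ -1` such that the main equation for `Γ` and `λ = -q - q⁻¹`
has a solution. -/
theorem stmt_8 {I : Type*} [Fintype I] [Nonempty I] [DecidableEq I]
    (a : I → I → ℕ) (hsymm : ∀ i j, a i j = a j i)
    (hconn : ∀ i j, ∃ n : ℕ, 1 ≤ n ∧ 0 < ((Matrix.of a) ^ n) i j) :
    ∃ q : ℂ, q ≠ 0 ∧ q ^ 2 ≠ -1 ∧ MainEqSolvable a (-q - q⁻¹) := by
  set A : Matrix I I ℝ := (of a).map (Nat.cast : ℕ → ℝ)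
  have hA : A.IsHermitian := by
    ext i j
    simp [A, hsymm i j]
  obtain ⟨μ, u, hμ, hu, hAu⟩ := (isIrreducible_map_natCast hconn).exists_pos_eigenvector hA
  obtain ⟨q, hq0, hq2, hq⟩ := Complex.exists_neg_sub_inv_eq (Complex.ofReal_ne_zero.2 hμ.ne')
  refine ⟨q, hq0, hq2, hq ▸ mainEqSolvable_of_mulVec_eq hsymm
    (fun i => Complex.ofReal_ne_zero.2 (hu i).ne') fun i => ?_⟩
  have h := congrFun hAu i
  simp only [mulVec, dotProduct, A, map_apply, of_apply, Pi.smul_apply, smul_eq_mul] at h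
  exact_mod_cast h
end

section
/- For every n ≥ 2 and every complex number c, there exists an invertible n × n complex matrix E such that Tr(E · (E^T)^{-1}) = c. -/
open Matrix

/-!
For a transvection `E = 1 + a eᵢⱼ` (`i ≠ j`) we have `(Eᵀ)⁻¹ = 1 - a eⱼᵢ`, so
`E (Eᵀ)⁻¹ = 1 + a eᵢⱼ - a eⱼᵢ - a² eᵢᵢ` has trace `n - a²`. Since `ℂ` is algebraically
closed, `a` can be chosen with `a² = n - c`.
-/

namespace Matrix

variable {ι R : Type*} [DecidableEq ι] [CommRing R]

theorem transpose_transvection (i j : ι) (c : R) :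
    (transvection i j c)ᵀ = transvection j i c := by
  simp [transvection, transpose_single]

variable [Fintype ι] {i j : ι}

theorem inv_transvection (h : i ≠ j) (c : R) :
    (transvection i j c)⁻¹ = transvection i j (-c) :=
  inv_eq_right_inv <| by rw [transvection_mul_transvection_same _ _ h, add_neg_cancel,
    transvection_zero]

theorem isUnit_transvection (h : i ≠ j) (c : R) : IsUnit (transvection i j c) :=
  (isUnit_iff_isUnit_det _).2 <| by simp [det_transvection_of_ne _ _ h]

theorem trace_transvection_mul_transvection_swap (h : i ≠ j) (c d : R) :
    (transvection i j c * transvection j i d).trace = Fintype.card ι + c * d := by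
  simp [transvection, Matrix.add_mul, Matrix.mul_add, trace_add, trace_single_eq_of_ne _ _ _ h,
    trace_single_eq_of_ne _ _ _ h.symm]

theorem trace_transvection_mul_inv_transpose (h : i ≠ j) (c : R) :
    (transvection i j c * (transvection i j c)ᵀ⁻¹).trace = Fintype.card ι - c ^ 2 := by
  rw [transpose_transvection, inv_transvection h.symm,
    trace_transvection_mul_transvection_swap h]
  ring

end Matrix

/-- For every `n ≥ 2` and every `c ∈ ℂ` there is an invertible `n × n`
complex matrix `E` with `Tr (E * (Eᵀ)⁻¹) = c`. -/
theorem stmt_10 (n : ℕ) (hn : 2 ≤ n) (c : ℂ) :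
    ∃ E : Matrix (Fin n) (Fin n) ℂ, IsUnit E ∧ (E * (Eᵀ)⁻¹).trace = c := by
  obtain ⟨a, ha⟩ := IsAlgClosed.exists_pow_nat_eq ((n : ℂ) - c) two_pos
  have h01 : (⟨0, by omega⟩ : Fin n) ≠ ⟨1, by omega⟩ := by simp
  refine ⟨transvection _ _ a, isUnit_transvection h01 a, ?_⟩
  rw [trace_transvection_mul_inv_transpose h01, ha, Fintype.card_fin]
  ring
end

section
/- For every n ≥ 3 and every pair (x, y) ∈ ℂ², there exist invertible n × n complex matrices E and F such that Tr(E · (F^T)^{-1}) = x and Tr(F · (E^T)^{-1}) = y. -/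
open Matrix

lemma quad_aux (d e : ℂ) (he : e ≠ 0) : ∃ t : ℂ, t ≠ 0 ∧ t + e * t⁻¹ = d := by
  obtain ⟨s, hs⟩ := IsAlgClosed.exists_pow_nat_eq (k := ℂ) (d ^ 2 - 4 * e) (n := 2) (by norm_num)
  set t : ℂ := (d + s) / 2 with htdef
  have hq : t ^ 2 - d * t + e = 0 := by
    rw [htdef]
    linear_combination hs / 4
  have ht0 : t ≠ 0 := by
    intro h0
    rw [h0] at hq
    simp at hq
    exact he hq
  refine ⟨t, ht0, ?_⟩
  field_simp
  linear_combination hs / 2 - hq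

/-- For every `n ≥ 3` and every pair `(x, y) ∈ ℂ²` there are invertible
`n × n` complex matrices `E` and `F` with `Tr (E * (Fᵀ)⁻¹) = x` and `Tr (F * (Eᵀ)⁻¹) = y`. -/
theorem stmt_11 (n : ℕ) (hn : 3 ≤ n) (x y : ℂ) :
    ∃ E F : Matrix (Fin n) (Fin n) ℂ, IsUnit E ∧ IsUnit F ∧
      (E * (Fᵀ)⁻¹).trace = x ∧ (F * (Eᵀ)⁻¹).trace = y := by
  -- choose u with u - u⁻¹ = x - y
  obtain ⟨u, hu0, hu⟩ := quad_aux (x - y) (-1) (by norm_num)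
  have huc : u - u⁻¹ = x - y := by linear_combination hu
  -- choose t with t + t⁻¹ = x - (n-3) - u
  obtain ⟨t, ht0, ht⟩ := quad_aux (x - ((n : ℂ) - 3) - u) 1 (by norm_num)
  have htc : t + t⁻¹ = x - ((n : ℂ) - 3) - u := by linear_combination ht
  set i0 : Fin n := ⟨0, by omega⟩
  set i1 : Fin n := ⟨1, by omega⟩
  set i2 : Fin n := ⟨2, by omega⟩
  have h01 : i0 ≠ i1 := by simp [i0, i1, Fin.ext_iff]
  have h02 : i0 ≠ i2 := by simp [i0, i2, Fin.ext_iff]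
  have h12 : i1 ≠ i2 := by simp [i1, i2, Fin.ext_iff]
  set d : Fin n → ℂ := fun i => if i = i0 then t else if i = i1 then t⁻¹ else if i = i2 then u else 1 with hd
  have hdne : ∀ i, d i ≠ 0 := by
    intro i
    simp only [hd]
    split_ifs <;> simp [ht0, hu0]
  -- sum of a function supported on {i0, i1, i2} shifted by 1
  have key : ∀ g : Fin n → ℂ, (∀ i, i ≠ i0 → i ≠ i1 → i ≠ i2 → g i = 1) →
      ∑ i, g i = g i0 + g i1 + g i2 + ((n : ℂ) - 3) := by
    intro g hg
    have hsub : ({i0, i1, i2} : Finset (Fin n)) ⊆ Finset.univ := Finset.subset_univ _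
    have := Finset.sum_subset hsub (f := fun i => g i - 1) ?_
    · have hcard : ({i0, i1, i2} : Finset (Fin n)).card = 3 := by
        rw [Finset.card_insert_of_notMem (by simp [h01, h02]),
          Finset.card_insert_of_notMem (by simp [h12]), Finset.card_singleton]
      have hs3 : ∑ i ∈ ({i0, i1, i2} : Finset (Fin n)), (g i - 1) =
          (g i0 - 1) + (g i1 - 1) + (g i2 - 1) := by
        rw [Finset.sum_insert (by simp [h01, h02]), Finset.sum_insert (by simp [h12]),
          Finset.sum_singleton]
        ring
      have huniv : ∑ i, (g i - 1) = (∑ i, g i) - (n : ℂ) := by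
        rw [Finset.sum_sub_distrib]
        simp
      rw [hs3] at this
      rw [← this] at huniv
      linear_combination -huniv
    · intro i _ hi
      simp only [Finset.mem_insert, Finset.mem_singleton, not_or] at hi
      simp [hg i hi.1 hi.2.1 hi.2.2]
  refine ⟨Matrix.diagonal d, 1, ?_, isUnit_one, ?_, ?_⟩
  · rw [Matrix.isUnit_iff_isUnit_det, Matrix.det_diagonal]
    exact (Finset.prod_ne_zero_iff.mpr (fun i _ => hdne i)).isUnit
  · have e0 : d i0 = t := by simp [hd]
    have e1 : d i1 = t⁻¹ := by simp [hd, h01.symm]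
    have e2 : d i2 = u := by simp [hd, h02.symm, h12.symm]
    rw [Matrix.transpose_one, inv_one, mul_one, Matrix.trace_diagonal]
    rw [key d (by intro i h0 h1 h2; simp [hd, h0, h1, h2]), e0, e1, e2]
    linear_combination htc
  · have e0 : d i0 = t := by simp [hd]
    have e1 : d i1 = t⁻¹ := by simp [hd, h01.symm]
    have e2 : d i2 = u := by simp [hd, h02.symm, h12.symm]
    have hinvd : (Matrix.diagonal d)⁻¹ = Matrix.diagonal (fun i => (d i)⁻¹) := by
      apply Matrix.inv_eq_right_inv
      rw [Matrix.diagonal_mul_diagonal]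
      convert Matrix.diagonal_one with i
      exact mul_inv_cancel₀ (hdne i)
    rw [Matrix.one_mul, Matrix.diagonal_transpose, hinvd, Matrix.trace_diagonal]
    rw [key (fun i => (d i)⁻¹) (by intro i h0 h1 h2; simp [hd, h0, h1, h2])]
    simp only [e0, e1, e2, inv_inv]
    linear_combination htc - huc
end

section
/- For n = 2, the image of the map (E, F) ↦ (Tr(E · (F^T)^{-1}), Tr(F · (E^T)^{-1})), where E and F range over invertible 2 × 2 complex matrices, is exactly the set {(x, y) ∈ ℂ² : x ≠ 0 and y ≠ 0} ∪ {(0, 0)}. -/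
/-!
Put `M = E (Fᵀ)⁻¹`. Then `F (Eᵀ)⁻¹ = ((M⁻¹))ᵀ`, so the pair of traces is `(Tr M, Tr M⁻¹)`,
and for a `2 × 2` matrix `Tr M⁻¹ = Tr M / det M` (the adjugate of `!![a, b; c, d]` is
`!![d, -b; -c, a]`). As `M` runs over the invertible matrices, `(Tr M, det M)` runs over all of
`ℂ × ℂˣ` (companion matrices), so the image is `{(t, t / d) : d ≠ 0}`.
-/

open Matrix

namespace Matrix

theorem trace_adjugate_fin_two {R : Type*} [CommRing R] (M : Matrix (Fin 2) (Fin 2) R) :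
    M.adjugate.trace = M.trace := by
  rw [adjugate_fin_two, trace_fin_two, trace_fin_two]
  simp only [of_apply, cons_val', cons_val_zero, cons_val_one, empty_val', cons_val_fin_one]
  ring

theorem trace_inv_fin_two {K : Type*} [Field K] (M : Matrix (Fin 2) (Fin 2) K) :
    M⁻¹.trace = M.trace / M.det := by
  rw [inv_def, trace_smul, trace_adjugate_fin_two, Ring.inverse_eq_inv', smul_eq_mul,
    div_eq_inv_mul]

theorem trace_mul_inv_transpose_eq_trace_inv {n R : Type*} [Fintype n] [DecidableEq n]
    [CommRing R] (E : Matrix n n R) {F : Matrix n n R} (hF : IsUnit F.det) :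
    (F * Eᵀ⁻¹).trace = (E * Fᵀ⁻¹)⁻¹.trace := by
  rw [mul_inv_rev, nonsing_inv_nonsing_inv _ (by rwa [det_transpose]), ← trace_transpose,
    transpose_mul, ← transpose_nonsing_inv, transpose_transpose, trace_mul_comm]

theorem exists_fin_two_trace_det {R : Type*} [CommRing R] (t d : R) :
    ∃ M : Matrix (Fin 2) (Fin 2) R, M.trace = t ∧ M.det = d :=
  ⟨!![t, 1; -d, 0], by simp [trace_fin_two_of], by simp [det_fin_two_of]⟩

end Matrix

/-- For `n = 2`, the image of the map
`(E, F) ↦ (Tr (E * (Fᵀ)⁻¹), Tr (F * (Eᵀ)⁻¹))` on pairs of invertible `2 × 2` complex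
matrices is exactly `{(x, y) : x ≠ 0 ∧ y ≠ 0} ∪ {(0, 0)}`. -/
theorem stmt_12 :
    {p : ℂ × ℂ | ∃ E F : Matrix (Fin 2) (Fin 2) ℂ, IsUnit E ∧ IsUnit F ∧
        (E * (Fᵀ)⁻¹).trace = p.1 ∧ (F * (Eᵀ)⁻¹).trace = p.2}
      = {p : ℂ × ℂ | p.1 ≠ 0 ∧ p.2 ≠ 0} ∪ {(0, 0)} := by
  ext ⟨x, y⟩
  simp only [Set.mem_ofPred_eq, Set.mem_union, Set.mem_singleton_iff, Prod.mk.injEq]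
  constructor
  · rintro ⟨E, F, hE, hF, rfl, rfl⟩
    rw [isUnit_iff_isUnit_det] at hE hF
    have hM : (E * Fᵀ⁻¹).det ≠ 0 := by
      simp [det_transpose, hE.ne_zero, hF.ne_zero]
    rw [trace_mul_inv_transpose_eq_trace_inv E hF, trace_inv_fin_two]
    by_cases h : (E * Fᵀ⁻¹).trace = 0
    · exact Or.inr ⟨h, by rw [h, zero_div]⟩
    · exact Or.inl ⟨h, div_ne_zero h hM⟩
  · intro h
    obtain ⟨d, hd, rfl⟩ : ∃ d ≠ 0, y = x / d := by
      rcases h with ⟨hx, hy⟩ | ⟨rfl, rfl⟩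
      · exact ⟨x / y, div_ne_zero hx hy, by field_simp⟩
      · exact ⟨1, one_ne_zero, by simp⟩
    obtain ⟨M, hMt, hMd⟩ := exists_fin_two_trace_det x d
    refine ⟨M, 1, ?_, isUnit_one, by simpa using hMt, ?_⟩
    · rw [isUnit_iff_isUnit_det, hMd]
      exact hd.isUnit
    · rw [trace_mul_inv_transpose_eq_trace_inv M (by simp), trace_inv_fin_two]
      simp [hMt, hMd]
end

section
/- Let E, F, E', F' be invertible n × n complex matrices. Then there exist invertible n × n complex matrices g and h with E' = g^T · E · h and F' = h^T · F · g if and only if the matrices E·(F^T)^{-1} and E'·((F')^T)^{-1} are similar (conjugate by an invertible matrix). -/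
open Matrix

/-- For invertible `n × n` complex matrices `E, F, E', F'`, there exist
invertible matrices `g, h` with `E' = gᵀ * E * h` and `F' = hᵀ * F * g` if and only if
`E * (Fᵀ)⁻¹` and `E' * (F'ᵀ)⁻¹` are similar. -/
theorem stmt_13 (n : ℕ) (E F E' F' : Matrix (Fin n) (Fin n) ℂ)
    (hE : IsUnit E) (hF : IsUnit F) (hE' : IsUnit E') (hF' : IsUnit F') :
    (∃ g h : Matrix (Fin n) (Fin n) ℂ, IsUnit g ∧ IsUnit h ∧
        E' = gᵀ * E * h ∧ F' = hᵀ * F * g) ↔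
      (∃ p : Matrix (Fin n) (Fin n) ℂ, IsUnit p ∧
        E' * (F'ᵀ)⁻¹ = p * (E * (Fᵀ)⁻¹) * p⁻¹) := by
  rw [Matrix.isUnit_iff_isUnit_det] at hE hF hE' hF'
  haveI := E.invertibleOfIsUnitDet hE
  haveI := F.invertibleOfIsUnitDet hF
  haveI := E'.invertibleOfIsUnitDet hE'
  haveI := F'.invertibleOfIsUnitDet hF'
  constructor
  · rintro ⟨g, h, hg, hh, hEeq, hFeq⟩
    rw [Matrix.isUnit_iff_isUnit_det] at hg hh
    haveI := g.invertibleOfIsUnitDet hg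
    haveI := h.invertibleOfIsUnitDet hh
    refine ⟨gᵀ, ?_, ?_⟩
    · rw [Matrix.isUnit_iff_isUnit_det, Matrix.det_transpose]
      exact hg
    · subst hEeq hFeq
      simp only [Matrix.transpose_mul, Matrix.transpose_transpose, Matrix.mul_inv_rev,
        Matrix.mul_assoc, Matrix.mul_inv_cancel_left_of_invertible]
  · rintro ⟨p, hp, heq⟩
    rw [Matrix.isUnit_iff_isUnit_det] at hp
    haveI := p.invertibleOfIsUnitDet hp
    refine ⟨pᵀ, E⁻¹ * p⁻¹ * E', ?_, ?_, ?_, ?_⟩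
    · rw [Matrix.isUnit_iff_isUnit_det, Matrix.det_transpose]
      exact hp
    · rw [Matrix.isUnit_iff_isUnit_det]
      simp only [Matrix.det_mul, Matrix.det_nonsing_inv, Ring.inverse_eq_inv']
      exact (hE.inv.mul hp.inv).mul hE'
    · rw [Matrix.transpose_transpose, ← Matrix.mul_assoc, ← Matrix.mul_assoc,
        Matrix.mul_inv_cancel_right_of_invertible, Matrix.mul_inv_of_invertible, Matrix.one_mul]
    · have key : F'ᵀ = p * Fᵀ * E⁻¹ * p⁻¹ * E' := by
        have h1 : (F'ᵀ)⁻¹ = E'⁻¹ * (p * (E * (Fᵀ)⁻¹) * p⁻¹) := by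
          rw [← heq, ← Matrix.mul_assoc, Matrix.inv_mul_of_invertible, Matrix.one_mul]
        have h2 : F'ᵀ = (E'⁻¹ * (p * (E * (Fᵀ)⁻¹) * p⁻¹))⁻¹ := by
          rw [← h1, Matrix.inv_inv_of_invertible]
        rw [h2]
        simp only [Matrix.mul_inv_rev, Matrix.inv_inv_of_invertible, Matrix.mul_assoc]
      have : F' = (F'ᵀ)ᵀ := (Matrix.transpose_transpose F').symm
      rw [this, key]
      simp only [Matrix.transpose_mul, Matrix.transpose_transpose, Matrix.mul_assoc]
end

section
/- For every invertible n × n complex matrix E, the matrix S_E = E · (E^T)^{-1} is similar to its inverse: there exists an invertible n × n complex matrix p with S_E^{-1} = p · S_E · p^{-1}. -/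
/-!
Every square matrix `A` over a field is similar to its transpose. By the structure theorem over
the PID `K[X]`, the `K[X]`-module defined by `A` is a direct sum of cyclic modules `K[X] ⧸ (g)`,
and on each of them `(x, y) ↦ coefficient of X ^ (deg g - 1) in x * y mod g` is a nondegenerate
form for which multiplication by `X` is self-adjoint. The Gram matrix `T` of the resulting form on
`Kⁿ` is invertible and satisfies `Aᵀ * T = T * A`.

For `S = E * (Eᵀ)⁻¹` we have `Sᵀ = E⁻¹ * Eᵀ`, which is conjugate by `Eᵀ` to
`Eᵀ * E⁻¹ = S⁻¹`; hence `S` is conjugate to `Sᵀ` and to `S⁻¹`.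
-/

open Matrix Polynomial DirectSum

def HasSelfAdjointXForm (K M : Type*) [Field K] [AddCommGroup M] [Module K M] [Module K[X] M] :
    Prop :=
  ∃ B : LinearMap.BilinForm K M,
    B.SeparatingLeft ∧ B.IsAdjointPair B ((X : K[X]) • ·) ((X : K[X]) • ·)

variable {K : Type*} [Field K]

theorem LinearMap.BilinForm.isAdjointPair_congr {M N : Type*} [AddCommGroup M] [Module K M]
    [AddCommGroup N] [Module K N] {B : LinearMap.BilinForm K N} {g : N → N}
    (h : B.IsAdjointPair B g g) (e : M ≃ₗ[K] N) {f : M → M} (hfg : ∀ x, e (f x) = g (e x)) :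
    (congr e.symm B).IsAdjointPair (congr e.symm B) f f := fun x y => by
  simpa [hfg] using h (e x) (e y)

theorem HasSelfAdjointXForm.of_linearEquiv {M N : Type*} [AddCommGroup M] [Module K M]
    [Module K[X] M] [IsScalarTower K K[X] M] [AddCommGroup N] [Module K N] [Module K[X] N]
    [IsScalarTower K K[X] N] (e : M ≃ₗ[K[X]] N) (h : HasSelfAdjointXForm K N) :
    HasSelfAdjointXForm K M := by
  obtain ⟨B, hsep, hX⟩ := h
  let e' := e.restrictScalars K
  exact ⟨_, hsep.congr e'.symm e'.symm,
    LinearMap.BilinForm.isAdjointPair_congr hX e' fun x => e.map_smul X x⟩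

theorem HasSelfAdjointXForm.directSum {ι : Type*} [Fintype ι] [DecidableEq ι] {Q : ι → Type*}
    [∀ i, AddCommGroup (Q i)] [∀ i, Module K (Q i)] [∀ i, Module K[X] (Q i)]
    (h : ∀ i, HasSelfAdjointXForm K (Q i)) : HasSelfAdjointXForm K (⨁ i, Q i) := by
  choose B hsep hX using h
  let π (i : ι) : (⨁ i, Q i) →ₗ[K] Q i := component K ι Q i
  refine ⟨∑ i, (B i).compl₁₂ (π i) (π i), fun x hx => ?_, fun x y => ?_⟩
  · refine DFinsupp.ext fun j => hsep j (x j) fun z => ?_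
    have hπ (i : ι) (hij : i ≠ j) : π i (lof K ι Q j z) = 0 := by
      simp [π, component.of, hij.symm]
    have hxz := hx (lof K ι Q j z)
    rw [LinearMap.sum_apply, LinearMap.sum_apply, Finset.sum_eq_single_of_mem j
      (Finset.mem_univ j) fun i _ hij => by simp [hπ i hij]] at hxz
    simpa [π, ← apply_eq_component] using hxz
  · simp only [LinearMap.sum_apply, LinearMap.compl₁₂_apply]
    exact Finset.sum_congr rfl fun i _ => hX i (π i x) (π i y)

namespace Polynomial

variable {g : K[X]}

noncomputable def topCoeffMod (hg : g.Monic) : K[X] ⧸ Ideal.span {g} →ₗ[K] K :=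
  lcoeff K (g.natDegree - 1) ∘ₗ AdjoinRoot.modByMonicHom hg

theorem topCoeffMod_mk_of_degree_lt (hg : g.Monic) {P : K[X]} (hP : P.degree < g.degree) :
    topCoeffMod hg (Ideal.Quotient.mk _ P) = P.coeff (g.natDegree - 1) := by
  change (AdjoinRoot.modByMonicHom hg (AdjoinRoot.mk g P)).coeff _ = _
  rw [AdjoinRoot.modByMonicHom_mk, (modByMonic_eq_self_iff hg).mpr hP]

theorem hasSelfAdjointXForm_quotient_span_singleton_of_monic (hg : g.Monic) :
    HasSelfAdjointXForm K (K[X] ⧸ Ideal.span {g}) := by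
  refine ⟨(LinearMap.mul K _).compr₂ (topCoeffMod hg), fun x hx => ?_, fun x y => ?_⟩
  · obtain ⟨P, rfl⟩ := Ideal.Quotient.mk_surjective x
    by_contra hP0
    set r := P %ₘ g
    have hrP : Ideal.Quotient.mk _ r = Ideal.Quotient.mk _ P :=
      AdjoinRoot.mk_leftInverse hg (AdjoinRoot.mk g P)
    have hr0 : r ≠ 0 := fun h => hP0 (by rw [← hrP, h, map_zero])
    have hrg : r.natDegree < g.natDegree :=
      natDegree_lt_natDegree hr0 (degree_modByMonic_lt _ hg)
    set k := g.natDegree - 1 - r.natDegree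
    have hk : g.natDegree - 1 = r.natDegree + k := by omega
    have hdeg : (r * X ^ k).degree < g.degree :=
      degree_lt_degree (by rw [natDegree_mul_X_pow k hr0]; omega)
    -- pairing with `X ^ k` moves the leading coefficient of `r` to the top coefficient
    have key := hx (Ideal.Quotient.mk _ (X ^ k))
    rw [LinearMap.compr₂_apply, LinearMap.mul_apply', ← hrP, ← map_mul,
      topCoeffMod_mk_of_degree_lt hg hdeg, hk, coeff_mul_X_pow, coeff_natDegree] at key
    exact leadingCoeff_ne_zero.mpr hr0 key
  · simp only [LinearMap.compr₂_apply, LinearMap.mul_apply', smul_mul_assoc, mul_smul_comm]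

theorem hasSelfAdjointXForm_quotient_span_singleton (hg : g ≠ 0) :
    HasSelfAdjointXForm K (K[X] ⧸ Ideal.span {g}) := by
  classical
  exact (hasSelfAdjointXForm_quotient_span_singleton_of_monic (monic_normalize hg)).of_linearEquiv
    (Submodule.quotEquivOfEq _ _
      (Ideal.span_singleton_eq_span_singleton.mpr (normalize_associated g).symm))

end Polynomial

theorem Module.AEval'.hasSelfAdjointXForm {V : Type*} [AddCommGroup V] [Module K V]
    [FiniteDimensional K V] (f : Module.End K V) : HasSelfAdjointXForm K (AEval' f) := by
  classical
  obtain ⟨ι, _, p, hp, e, ⟨equiv⟩⟩ :=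
    Module.equiv_directSum_of_isTorsion (AEval.isTorsion_of_finiteDimensional K V f)
  exact (HasSelfAdjointXForm.directSum fun i =>
    hasSelfAdjointXForm_quotient_span_singleton (pow_ne_zero _ (hp i).ne_zero)).of_linearEquiv equiv

theorem Module.End.exists_separatingLeft_isAdjointPair {V : Type*} [AddCommGroup V] [Module K V]
    [FiniteDimensional K V] (f : Module.End K V) :
    ∃ B : LinearMap.BilinForm K V, B.SeparatingLeft ∧ B.IsAdjointPair B f f := by
  obtain ⟨B, hsep, hX⟩ := AEval'.hasSelfAdjointXForm f
  let e := AEval'.of f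
  exact ⟨_, hsep.congr e.symm e.symm,
    LinearMap.BilinForm.isAdjointPair_congr hX e fun x => (AEval'.X_smul_of f x).symm⟩

theorem Matrix.isConj_transpose {ι : Type*} [Fintype ι] [DecidableEq ι] (A : Matrix ι ι K) :
    IsConj A Aᵀ := by
  obtain ⟨B, hsep, hadj⟩ := Module.End.exists_separatingLeft_isAdjointPair (toLin' A)
  set T := LinearMap.toMatrix₂' K B
  have hT : IsUnit T := (isUnit_iff_isUnit_det T).mpr
    (separatingLeft_iff_det_ne_zero.mp hsep.toMatrix₂').isUnit
  have hAT : Aᵀ * T = T * A := by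
    rw [← toLinearMap₂'_toMatrix' (R := K) B] at hadj
    exact (isAdjointPair_toLinearMap₂' T T A A).mp hadj
  exact ⟨hT.unit, hAT.symm⟩

/-- For every invertible `n × n` complex matrix `E`, the matrix
`S_E = E * (Eᵀ)⁻¹` is similar to its inverse. -/
theorem stmt_14 (n : ℕ) (E : Matrix (Fin n) (Fin n) ℂ) (hE : IsUnit E) :
    ∃ p : Matrix (Fin n) (Fin n) ℂ, IsUnit p ∧
      (E * (Eᵀ)⁻¹)⁻¹ = p * (E * (Eᵀ)⁻¹) * p⁻¹ := by
  set S := E * (Eᵀ)⁻¹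
  have hET : IsUnit Eᵀ := (isUnit_transpose E).mpr hE
  have hSinv : S⁻¹ = Eᵀ * E⁻¹ := by
    rw [Matrix.mul_inv_rev, nonsing_inv_nonsing_inv _ ((isUnit_iff_isUnit_det _).mp hET)]
  have hS : IsConj Sᵀ S⁻¹ := ⟨hET.unit, by
    simp [SemiconjBy, S, hSinv, transpose_nonsing_inv, mul_assoc]⟩
  obtain ⟨c, hc⟩ := S.isConj_transpose.trans hS
  refine ⟨c, c.isUnit, ?_⟩
  rw [← coe_units_inv, hc.eq, mul_assoc, Units.mul_inv, mul_one]
end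

section
/- The set of 6-tuples of complex numbers (y_12, y_21, y_13, y_31, y_23, y_32) satisfying y_12·y_21 = 1, y_13·y_31 = 1, y_23·y_32 = 1, together with y_21 + y_31 = −1, y_12 + y_32 = −1, and y_13 + y_23 = −1, is infinite. (This shows that the triangle graph admits infinitely many solutions of the main equation when −q − q^{-1} = −1, i.e. q + q^{-1} = 1, so the triangle graph is not strictly rigid.) -/
/-- The set of 6-tuples `(y₁₂, y₂₁, y₁₃, y₃₁, y₂₃, y₃₂)` of complex
numbers satisfying `y₁₂·y₂₁ = 1`, `y₁₃·y₃₁ = 1`, `y₂₃·y₃₂ = 1`, together with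
`y₂₁ + y₃₁ = -1`, `y₁₂ + y₃₂ = -1` and `y₁₃ + y₂₃ = -1`, is infinite. (Hence the
triangle graph admits infinitely many solutions of the main equation when
`q + q⁻¹ = 1`, so it is not strictly rigid.) -/
theorem stmt_16 :
    {y : ℂ × ℂ × ℂ × ℂ × ℂ × ℂ |
      y.1 * y.2.1 = 1 ∧
      y.2.2.1 * y.2.2.2.1 = 1 ∧
      y.2.2.2.2.1 * y.2.2.2.2.2 = 1 ∧
      y.2.1 + y.2.2.2.1 = -1 ∧
      y.1 + y.2.2.2.2.2 = -1 ∧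
      y.2.2.1 + y.2.2.2.2.1 = -1}.Infinite := by
  apply Set.infinite_of_injective_forall_mem
    (f := fun n : ℕ => (((n : ℂ) + 1)⁻¹, (n : ℂ) + 1, -((n : ℂ) + 2)⁻¹,
      -((n : ℂ) + 2), -((n : ℂ) + 1) * ((n : ℂ) + 2)⁻¹,
      -((n : ℂ) + 2) * ((n : ℂ) + 1)⁻¹))
  case hi =>
    intro a b hab
    have h2 : ((a : ℂ) + 1) = (b : ℂ) + 1 := congrArg (fun p => p.2.1) hab
    have : (a : ℂ) = b := by linear_combination h2
    exact_mod_cast this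
  case hf =>
    intro n
    have h1 : ((n : ℂ) + 1) ≠ 0 := by
      intro h; have := congrArg Complex.re h; simp at this
      have : (n : ℝ) + 1 = 0 := by exact_mod_cast this
      nlinarith [Nat.cast_nonneg (α := ℝ) n]
    have h2 : ((n : ℂ) + 2) ≠ 0 := by
      intro h; have := congrArg Complex.re h; simp at this
      have : (n : ℝ) + 2 = 0 := by exact_mod_cast this
      nlinarith [Nat.cast_nonneg (α := ℝ) n]
    refine ⟨?_, ?_, ?_, ?_, ?_, ?_⟩ <;> field_simp <;> ring
end
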